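/- arXiv:1709.03193 — 5 statements merged into one kernel-verified Lean document; each statement's English description precedes it below -/
import Mathlib

section
/- (Pliss–Maizel theorem) Let A : [0,∞) → M_n(ℝ) be bounded and continuous. If for every bounded continuous f : [0,∞) → ℝⁿ the system ẋ = A(t)x + f(t) has at least one solution bounded on [0,∞), then the homogeneous system ẋ = A(t)x is hyperbolic. -/
open Set Filter

noncomputable section

/-- A time scale: a closed unbounded subset of `[0,∞)` containing `0`. -/
def IsTimeScale (T : Set ℝ) : Prop :=
  IsClosed T ∧ T ⊆ Ici 0 ∧ ¬ BddAbove T ∧ (0 : ℝ) ∈ T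

/-- The forward jump operator `σ(t) = inf {τ ∈ T | τ > t}`. -/
def tsSigma (T : Set ℝ) (t : ℝ) : ℝ := sInf {τ ∈ T | t < τ}

/-- The graininess `μ(t) = σ(t) − t`. -/
def tsMu (T : Set ℝ) (t : ℝ) : ℝ := tsSigma T t - t

/-- `[t]_T = sup {τ ∈ T | τ ≤ t}`. -/
def tsFloor (T : Set ℝ) (t : ℝ) : ℝ := sSup {τ ∈ T | τ ≤ t}

/-- The integrand of the time transformation. -/
def tsG (T : Set ℝ) (τ : ℝ) : ℝ :=
  if 0 < tsMu T (tsFloor T τ) then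
    Real.log (1 + tsMu T (tsFloor T τ)) / tsMu T (tsFloor T τ)
  else 1

/-- The time transformation `s(t) = ∫₀ᵗ g(τ) dτ`. -/
def tsS (T : Set ℝ) (t : ℝ) : ℝ := ∫ τ in (0:ℝ)..t, tsG T τ

/-- `f` has Δ-derivative `γ` at `t ∈ T`. -/
def HasDeltaDerivAt {E : Type*} [NormedAddCommGroup E] [NormedSpace ℝ E]
    (T : Set ℝ) (f : ℝ → E) (γ : E) (t : ℝ) : Prop :=
  ∀ ε > 0, ∃ δ > 0, ∀ u ∈ T, |u - t| < δ →
    ‖(f (tsSigma T t) - f u) - (tsSigma T t - u) • γ‖ ≤ ε * |tsSigma T t - u|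

/-- rd-continuity on the time scale `T`: continuity at right-dense points and
left-continuity at left-dense points. -/
def RdContinuousOn {E : Type*} [TopologicalSpace E] (T : Set ℝ) (f : ℝ → E) : Prop :=
  (∀ t ∈ T, tsMu T t = 0 → ContinuousWithinAt f T t) ∧
  (∀ t ∈ T, t ∈ closure (T ∩ Iio t) → ContinuousWithinAt f (T ∩ Iio t) t)

/-- The action of an `n × n` real matrix on Euclidean space. -/
def mulE {n : ℕ} (M : Matrix (Fin n) (Fin n) ℝ) (x : EuclideanSpace ℝ (Fin n)) :
    EuclideanSpace ℝ (Fin n) := Matrix.toEuclideanLin M x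

/-- `Φ` is the fundamental matrix of the linear ODE `ẋ = A(t)x` on `[0,∞)`. -/
def IsFundamentalOn (n : ℕ) (A Φ : ℝ → Matrix (Fin n) (Fin n) ℝ) : Prop :=
  Φ 0 = 1 ∧ ∀ t ∈ Ici (0:ℝ), ∀ x₀ : EuclideanSpace ℝ (Fin n),
    HasDerivWithinAt (fun τ => mulE (Φ τ) x₀) (mulE (A t) (mulE (Φ t) x₀)) (Ici 0) t

/-- Hyperbolicity (exponential dichotomy) of `ẋ = A(t)x` on `[0,∞)`, expressed through the
fundamental matrix `Φ`, with stable/unstable families `U`, `V` and constants `C`, `lam`. -/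
def IsHyperbolicWith (n : ℕ) (Φ : ℝ → Matrix (Fin n) (Fin n) ℝ)
    (U V : ℝ → Submodule ℝ (EuclideanSpace ℝ (Fin n))) (C lam : ℝ) : Prop :=
  0 < C ∧ 0 < lam ∧
  (∀ t ∈ Ici (0:ℝ), IsCompl (U t) (V t)) ∧
  (∀ t ∈ Ici (0:ℝ), ∀ τ ∈ Ici (0:ℝ),
    (U τ).map (Matrix.toEuclideanLin (Φ t * (Φ τ)⁻¹)) = U t ∧
    (V τ).map (Matrix.toEuclideanLin (Φ t * (Φ τ)⁻¹)) = V t) ∧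
  (∀ τ ∈ Ici (0:ℝ), ∀ t, τ ≤ t → ∀ x₀ ∈ U τ,
    ‖mulE (Φ t * (Φ τ)⁻¹) x₀‖ ≤ C * Real.exp (-lam * (t - τ)) * ‖x₀‖) ∧
  (∀ τ ∈ Ici (0:ℝ), ∀ t ∈ Ici (0:ℝ), t ≤ τ → ∀ x₀ ∈ V τ,
    ‖mulE (Φ t * (Φ τ)⁻¹) x₀‖ ≤ C * Real.exp (lam * (t - τ)) * ‖x₀‖)

/-- Hyperbolicity of `ẋ = A(t)x`, with the dichotomy data quantified existentially. -/
def IsHyperbolic (n : ℕ) (Φ : ℝ → Matrix (Fin n) (Fin n) ℝ) : Prop :=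
  ∃ U V C lam, IsHyperbolicWith n Φ U V C lam

/-- `Ψ` is the fundamental Δ-matrix of `x^Δ = 𝐀(t)x` on the time scale `T`. -/
def IsDeltaFundamental {n : ℕ} (T : Set ℝ) (A Ψ : ℝ → Matrix (Fin n) (Fin n) ℝ) : Prop :=
  Ψ 0 = 1 ∧ ∀ t ∈ T, ∀ x₀ : EuclideanSpace ℝ (Fin n),
    HasDeltaDerivAt T (fun τ => mulE (Ψ τ) x₀) (mulE (A t) (mulE (Ψ t) x₀)) t

/-- `𝐀` is uniformly regressive on `T`. -/
def UniformlyRegressive {n : ℕ} (T : Set ℝ) (A : ℝ → Matrix (Fin n) (Fin n) ℝ) : Prop :=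
  (∀ t ∈ T, IsUnit (1 + tsMu T t • A t)) ∧
  ∃ M : ℝ, ∀ t ∈ T, ∀ x : EuclideanSpace ℝ (Fin n),
    ‖mulE (1 + tsMu T t • A t)⁻¹ x‖ ≤ M * ‖x‖

end

section PMAux

open MeasureTheory intervalIntegral

variable {n : ℕ}

/-! ### Basic algebra of `mulE` -/

lemma pm_mulE_add (M : Matrix (Fin n) (Fin n) ℝ) (x y : EuclideanSpace ℝ (Fin n)) :
    mulE M (x + y) = mulE M x + mulE M y := map_add _ _ _

lemma pm_mulE_sub (M : Matrix (Fin n) (Fin n) ℝ) (x y : EuclideanSpace ℝ (Fin n)) :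
    mulE M (x - y) = mulE M x - mulE M y := map_sub _ _ _

lemma pm_mulE_smul (M : Matrix (Fin n) (Fin n) ℝ) (c : ℝ) (x : EuclideanSpace ℝ (Fin n)) :
    mulE M (c • x) = c • mulE M x := map_smul _ _ _

lemma pm_mulE_zero (M : Matrix (Fin n) (Fin n) ℝ) :
    mulE M (0 : EuclideanSpace ℝ (Fin n)) = 0 := map_zero _

lemma pm_mulE_neg (M : Matrix (Fin n) (Fin n) ℝ) (x : EuclideanSpace ℝ (Fin n)) :
    mulE M (-x) = -mulE M x := map_neg _ _

lemma pm_toEuclideanLin_mul (M N : Matrix (Fin n) (Fin n) ℝ) :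
    (Matrix.toEuclideanLin (M * N) : EuclideanSpace ℝ (Fin n) →ₗ[ℝ] EuclideanSpace ℝ (Fin n))
      = (Matrix.toEuclideanLin M).comp (Matrix.toEuclideanLin N) := by
  simp [Matrix.toEuclideanLin_eq_toLin, Matrix.toLin_mul _ (PiLp.basisFun 2 ℝ (Fin n)) _]

lemma pm_mulE_mul (M N : Matrix (Fin n) (Fin n) ℝ) (x : EuclideanSpace ℝ (Fin n)) :
    mulE (M * N) x = mulE M (mulE N x) := by
  show (Matrix.toEuclideanLin (M * N)) x = _
  rw [pm_toEuclideanLin_mul]; rfl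

lemma pm_mulE_one (x : EuclideanSpace ℝ (Fin n)) : mulE (1 : Matrix (Fin n) (Fin n) ℝ) x = x := by
  show (Matrix.toEuclideanLin (1 : Matrix (Fin n) (Fin n) ℝ)) x = x
  rw [Matrix.toEuclideanLin_eq_toLin, Matrix.toLin_one]; rfl

/-! ### Homogeneous solutions and Gronwall estimates -/

/-- `φ` is a solution of the homogeneous system on `[0,∞)`. -/
def PMHSol (A : ℝ → Matrix (Fin n) (Fin n) ℝ) (φ : ℝ → EuclideanSpace ℝ (Fin n)) : Prop :=
  ∀ t ∈ Set.Ici (0:ℝ), HasDerivWithinAt φ (mulE (A t) (φ t)) (Set.Ici 0) t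

lemma PMHSol.continuousOn {A : ℝ → Matrix (Fin n) (Fin n) ℝ}
    {φ : ℝ → EuclideanSpace ℝ (Fin n)} (h : PMHSol A φ) :
    ContinuousOn φ (Set.Ici 0) := fun t ht => (h t ht).continuousWithinAt

lemma PMHSol.sub {A : ℝ → Matrix (Fin n) (Fin n) ℝ}
    {φ ψ : ℝ → EuclideanSpace ℝ (Fin n)} (hφ : PMHSol A φ) (hψ : PMHSol A ψ) :
    PMHSol A (φ - ψ) := by
  intro t ht
  have := (hφ t ht).sub (hψ t ht)
  simpa [pm_mulE_sub] using this

/-- Forward Gronwall estimate for homogeneous solutions. -/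
lemma PMHSol.grow {A : ℝ → Matrix (Fin n) (Fin n) ℝ} {M : ℝ}
    (hA : ∀ t ∈ Set.Ici (0:ℝ), ∀ x : EuclideanSpace ℝ (Fin n), ‖mulE (A t) x‖ ≤ M * ‖x‖)
    {φ : ℝ → EuclideanSpace ℝ (Fin n)} (hφ : PMHSol A φ)
    {a b : ℝ} (ha : 0 ≤ a) (hab : a ≤ b) :
    ‖φ b‖ ≤ ‖φ a‖ * Real.exp (M * (b - a)) := by
  have hcont : ContinuousOn φ (Set.Icc a b) :=
    hφ.continuousOn.mono (fun x hx => le_trans ha hx.1)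
  have key := norm_le_gronwallBound_of_norm_deriv_right_le (f := φ)
      (f' := fun t => mulE (A t) (φ t)) (δ := ‖φ a‖) (K := M) (ε := 0) (a := a) (b := b)
      hcont
      (fun x hx => (hφ x (le_trans ha hx.1)).mono (Set.Ici_subset_Ici.2 (le_trans ha hx.1)))
      le_rfl
      (fun x hx => by simpa using hA x (le_trans ha hx.1) (φ x))
      b ⟨hab, le_rfl⟩
  rwa [gronwallBound_ε0] at key

/-- Backward Gronwall estimate for homogeneous solutions. -/
lemma PMHSol.decay {A : ℝ → Matrix (Fin n) (Fin n) ℝ} {M : ℝ}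
    (hA : ∀ t ∈ Set.Ici (0:ℝ), ∀ x : EuclideanSpace ℝ (Fin n), ‖mulE (A t) x‖ ≤ M * ‖x‖)
    {φ : ℝ → EuclideanSpace ℝ (Fin n)} (hφ : PMHSol A φ)
    {a b : ℝ} (ha : 0 ≤ a) (hab : a ≤ b) :
    ‖φ a‖ ≤ ‖φ b‖ * Real.exp (M * (b - a)) := by
  set ψ : ℝ → EuclideanSpace ℝ (Fin n) := fun s => φ (a + b - s) with hψdef
  have hmaps : ∀ s ∈ Set.Icc a b, a + b - s ∈ Set.Icc a b := by
    intro s hs; constructor <;> [linarith [hs.2]; linarith [hs.1]]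
  have hcontφ : ContinuousOn φ (Set.Icc a b) :=
    hφ.continuousOn.mono (fun x hx => le_trans ha hx.1)
  have hcont : ContinuousOn ψ (Set.Icc a b) := by
    apply hcontφ.comp (Continuous.continuousOn (by continuity)) hmaps
  have hderiv : ∀ x ∈ Set.Ico a b,
      HasDerivWithinAt ψ ((-1 : ℝ) • mulE (A (a + b - x)) (φ (a + b - x))) (Set.Ici x) x := by
    intro x hx
    have hu : 0 < a + b - x := by linarith [hx.2, ha]
    have hφd : HasDerivAt φ (mulE (A (a + b - x)) (φ (a + b - x))) (a + b - x) := by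
      refine (hφ _ (le_of_lt hu)).hasDerivAt ?_
      exact Ici_mem_nhds hu
    have hh : HasDerivAt (fun s : ℝ => a + b - s) (-1 : ℝ) x := by
      simpa using ((hasDerivAt_id x).const_sub (a + b))
    exact (hφd.scomp x hh).hasDerivWithinAt
  have key := norm_le_gronwallBound_of_norm_deriv_right_le (f := ψ)
      (f' := fun x => (-1 : ℝ) • mulE (A (a + b - x)) (φ (a + b - x)))
      (δ := ‖ψ a‖) (K := M) (ε := 0) (a := a) (b := b)
      hcont hderiv le_rfl
      (fun x hx => by
        have := hA (a + b - x) (by linarith [hx.2, ha] : (0:ℝ) ≤ a + b - x) (φ (a + b - x))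
        have hψx : ψ x = φ (a + b - x) := rfl
        rw [hψx]
        simpa using this)
      b ⟨hab, le_rfl⟩
  rw [gronwallBound_ε0] at key
  have h1 : ψ b = φ a := by simp [hψdef]
  have h2 : ψ a = φ b := by simp [hψdef]
  rwa [h1, h2] at key

/-- A homogeneous solution vanishing somewhere on `[0,∞)` vanishes identically there. -/
lemma PMHSol.eq_zero {A : ℝ → Matrix (Fin n) (Fin n) ℝ} {M : ℝ}
    (hA : ∀ t ∈ Set.Ici (0:ℝ), ∀ x : EuclideanSpace ℝ (Fin n), ‖mulE (A t) x‖ ≤ M * ‖x‖)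
    {φ : ℝ → EuclideanSpace ℝ (Fin n)} (hφ : PMHSol A φ)
    {τ : ℝ} (hτ : 0 ≤ τ) (h0 : φ τ = 0) : ∀ t ∈ Set.Ici (0:ℝ), φ t = 0 := by
  intro t ht
  rcases le_total t τ with h | h
  · have := hφ.decay hA (a := t) (b := τ) ht h
    rw [h0] at this; simp at this
    exact norm_le_zero_iff.mp (by simpa using this)
  · have := hφ.grow hA (a := τ) (b := t) hτ h
    rw [h0] at this; simp at this
    exact norm_le_zero_iff.mp (by simpa using this)

end PMAux

section PMAux2

open MeasureTheory intervalIntegral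

variable {n : ℕ} {A Φ : ℝ → Matrix (Fin n) (Fin n) ℝ} {M : ℝ}

lemma pm_hxb (hΦ : IsFundamentalOn n A Φ) (b : EuclideanSpace ℝ (Fin n)) :
    PMHSol A (fun t => mulE (Φ t) b) := fun t ht => hΦ.2 t ht b

lemma pm_xb_contOn (hΦ : IsFundamentalOn n A Φ) (b : EuclideanSpace ℝ (Fin n)) :
    ContinuousOn (fun t => mulE (Φ t) b) (Set.Ici 0) := (pm_hxb hΦ b).continuousOn

lemma pm_Phi_inj
    (hA : ∀ t ∈ Set.Ici (0:ℝ), ∀ x : EuclideanSpace ℝ (Fin n), ‖mulE (A t) x‖ ≤ M * ‖x‖)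
    (hΦ : IsFundamentalOn n A Φ) {t : ℝ} (ht : 0 ≤ t) :
    Function.Injective (fun b => mulE (Φ t) b) := by
  intro b b' hbb
  have hsol : PMHSol A ((fun s => mulE (Φ s) b) - fun s => mulE (Φ s) b') :=
    (pm_hxb hΦ b).sub (pm_hxb hΦ b')
  have hz : ((fun s => mulE (Φ s) b) - fun s => mulE (Φ s) b') t = 0 := by
    simp [Pi.sub_apply, hbb, sub_eq_zero]
  have h0 := hsol.eq_zero hA ht hz 0 Set.self_mem_Ici
  simp only [Pi.sub_apply, hΦ.1, pm_mulE_one, sub_eq_zero] at h0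
  exact h0

lemma pm_Phi_det_isUnit
    (hA : ∀ t ∈ Set.Ici (0:ℝ), ∀ x : EuclideanSpace ℝ (Fin n), ‖mulE (A t) x‖ ≤ M * ‖x‖)
    (hΦ : IsFundamentalOn n A Φ) {t : ℝ} (ht : 0 ≤ t) : IsUnit (Φ t).det := by
  rw [isUnit_iff_ne_zero]
  intro hdet
  obtain ⟨v, hv, hmv⟩ := (Matrix.exists_mulVec_eq_zero_iff).2 hdet
  set x : EuclideanSpace ℝ (Fin n) := (WithLp.equiv 2 (Fin n → ℝ)).symm v with hx
  have hmulE : mulE (Φ t) x = 0 := by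
    have h1 : mulE (Φ t) x = (WithLp.equiv 2 (Fin n → ℝ)).symm ((Φ t).mulVec v) := rfl
    rw [h1, hmv]
    rfl
  have hinj := pm_Phi_inj hA hΦ ht (a₁ := x) (a₂ := 0)
  have hx0 : x = 0 := hinj (by simpa [pm_mulE_zero] using hmulE)
  apply hv
  have := congrArg (WithLp.equiv 2 (Fin n → ℝ)) hx0
  simpa [hx] using this

/-- Uniqueness representation: a homogeneous solution is propagated by `Φ`. -/
lemma pm_rep
    (hA : ∀ t ∈ Set.Ici (0:ℝ), ∀ x : EuclideanSpace ℝ (Fin n), ‖mulE (A t) x‖ ≤ M * ‖x‖)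
    (hΦ : IsFundamentalOn n A Φ) {φ : ℝ → EuclideanSpace ℝ (Fin n)} (hφ : PMHSol A φ) :
    ∀ t ∈ Set.Ici (0:ℝ), φ t = mulE (Φ t) (φ 0) := by
  intro t ht
  have hsol : PMHSol A (φ - fun s => mulE (Φ s) (φ 0)) := hφ.sub (pm_hxb hΦ (φ 0))
  have hz : (φ - fun s => mulE (Φ s) (φ 0)) 0 = 0 := by
    simp [Pi.sub_apply, hΦ.1, pm_mulE_one]
  have := hsol.eq_zero hA le_rfl hz t ht
  simpa [Pi.sub_apply, sub_eq_zero] using this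

/-- The subspace of initial conditions with bounded trajectories. -/
def pmB (n : ℕ) (Φ : ℝ → Matrix (Fin n) (Fin n) ℝ) : Submodule ℝ (EuclideanSpace ℝ (Fin n)) where
  carrier := {b | ∃ C, ∀ t ∈ Set.Ici (0:ℝ), ‖mulE (Φ t) b‖ ≤ C}
  add_mem' := by
    rintro a b ⟨C₁, h₁⟩ ⟨C₂, h₂⟩
    exact ⟨C₁ + C₂, fun t ht => by
      rw [pm_mulE_add]
      exact (norm_add_le _ _).trans (add_le_add (h₁ t ht) (h₂ t ht))⟩
  zero_mem' := ⟨0, fun t ht => by simp [pm_mulE_zero]⟩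
  smul_mem' := by
    rintro c b ⟨C, h⟩
    exact ⟨|c| * C, fun t ht => by
      rw [pm_mulE_smul, norm_smul]
      exact mul_le_mul_of_nonneg_left (h t ht) (abs_nonneg c)⟩

lemma pm_mem_pmB {b : EuclideanSpace ℝ (Fin n)} :
    b ∈ pmB n Φ ↔ ∃ C, ∀ t ∈ Set.Ici (0:ℝ), ‖mulE (Φ t) b‖ ≤ C := Iff.rfl

/-! ### FTC helpers -/

variable {F : Type*} [NormedAddCommGroup F] [NormedSpace ℝ F] [CompleteSpace F]

lemma pm_ftc_deriv {G : ℝ → F} (hG : ContinuousOn G (Set.Ici 0)) {a t : ℝ}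
    (ha : 0 ≤ a) (ht : 0 ≤ t) :
    HasDerivWithinAt (fun u => ∫ s in a..u, G s) (G t) (Set.Ici 0) t := by
  have hint : IntervalIntegrable G volume a t := by
    apply ContinuousOn.intervalIntegrable
    apply hG.mono
    intro u hu
    exact le_trans (le_min ha ht) hu.1
  rcases lt_or_eq_of_le ht with htpos | hteq
  · have hmeas : StronglyMeasurableAtFilter G (nhds t) volume := by
      refine ContinuousOn.stronglyMeasurableAtFilter isOpen_Ioi (hG.mono Set.Ioi_subset_Ici_self) t htpos
    have hct : ContinuousAt G t :=
      (hG t (le_of_lt htpos)).continuousAt (Ici_mem_nhds htpos)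
    exact (intervalIntegral.integral_hasDerivAt_right hint hmeas hct).hasDerivWithinAt
  · subst hteq
    have hmeas : StronglyMeasurableAtFilter G (nhdsWithin 0 (Set.Ioi 0)) volume :=
      ⟨Set.Ici 0, nhdsWithin_mono 0 Set.Ioi_subset_Ici_self self_mem_nhdsWithin,
        hG.aestronglyMeasurable measurableSet_Ici⟩
    exact intervalIntegral.integral_hasDerivWithinAt_right (s := Set.Ici 0) (t := Set.Ioi 0)
      hint hmeas ((hG 0 Set.self_mem_Ici).mono Set.Ioi_subset_Ici_self)

lemma pm_ftc_eval {G φ : ℝ → F} (hG : ContinuousOn G (Set.Ici 0))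
    (hd : ∀ s ∈ Set.Ici (0:ℝ), HasDerivWithinAt φ (G s) (Set.Ici 0) s)
    {t : ℝ} (ht : 0 ≤ t) : ∫ s in (0:ℝ)..t, G s = φ t - φ 0 := by
  apply intervalIntegral.integral_eq_sub_of_hasDeriv_right_of_le ht
  · exact fun s hs => ((hd s hs.1).continuousWithinAt).mono (fun u hu => hu.1)
  · intro s hs
    exact (hd s (le_of_lt hs.1)).mono (fun u hu => le_trans (le_of_lt hs.1) (le_of_lt hu))
  · apply ContinuousOn.intervalIntegrable
    apply hG.mono
    rw [Set.uIcc_of_le ht]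
    exact fun u hu => hu.1

end PMAux2

section PMAux3

open MeasureTheory intervalIntegral

variable {n : ℕ}

/-- The matrix action as a continuous-linear-map-valued linear map. -/
noncomputable def pmCLM (n : ℕ) : Matrix (Fin n) (Fin n) ℝ →ₗ[ℝ]
    (EuclideanSpace ℝ (Fin n) →L[ℝ] EuclideanSpace ℝ (Fin n)) :=
  (LinearMap.toContinuousLinearMap :
      (EuclideanSpace ℝ (Fin n) →ₗ[ℝ] EuclideanSpace ℝ (Fin n)) ≃ₗ[ℝ]
      (EuclideanSpace ℝ (Fin n) →L[ℝ] EuclideanSpace ℝ (Fin n))).toLinearMap.comp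
    (Matrix.toEuclideanLin :
      Matrix (Fin n) (Fin n) ℝ ≃ₗ[ℝ]
      (EuclideanSpace ℝ (Fin n) →ₗ[ℝ] EuclideanSpace ℝ (Fin n))).toLinearMap

lemma pmCLM_apply (M : Matrix (Fin n) (Fin n) ℝ) (x : EuclideanSpace ℝ (Fin n)) :
    pmCLM n M x = mulE M x := rfl

lemma pmCLM_continuous : Continuous (pmCLM n) :=
  LinearMap.continuous_of_finiteDimensional _

lemma pm_mulE_contOn {A : ℝ → Matrix (Fin n) (Fin n) ℝ} {v : ℝ → EuclideanSpace ℝ (Fin n)}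
    {s : Set ℝ} (hA : ContinuousOn A s) (hv : ContinuousOn v s) :
    ContinuousOn (fun t => mulE (A t) (v t)) s := by
  have h1 : ContinuousOn (fun t => pmCLM n (A t)) s := pmCLM_continuous.comp_continuousOn hA
  simpa [pmCLM_apply] using h1.clm_apply hv

/-! ### From integral inequalities to exponential estimates -/

private lemma pm_exp_deriv {K : ℝ} (hK : K ≠ 0) (c : ℝ) (u : ℝ) :
    HasDerivAt (fun u : ℝ => Real.exp (c * (u/K))) (Real.exp (c * (u/K)) * (c/K)) u := by
  have h1 : HasDerivAt (fun u : ℝ => c * (u/K)) (c/K) u := by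
    simpa [mul_div_assoc, div_eq_mul_inv] using (((hasDerivAt_id u).div_const K).const_mul c)
  simpa [mul_comm, Function.comp_def] using (Real.hasDerivAt_exp (c * (u/K))).comp u h1

/-- Forward: if `g(t) ∫_a^t g⁻¹ ≤ K` then `g` decays exponentially forward. -/
lemma pm_expU {g : ℝ → ℝ} {K M : ℝ} (hK : 1 ≤ K) (hM : 0 ≤ M)
    (hgc : ContinuousOn g (Set.Ici 0)) (hgpos : ∀ t ∈ Set.Ici (0:ℝ), 0 < g t)
    (hup : ∀ u v : ℝ, 0 ≤ u → u ≤ v → g v ≤ g u * Real.exp (M * (v - u)))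
    (hkey : ∀ a ∈ Set.Ici (0:ℝ), ∀ t, a ≤ t → (∫ s in a..t, (g s)⁻¹) * g t ≤ K) :
    ∀ τ ∈ Set.Ici (0:ℝ), ∀ t, τ ≤ t →
      g t ≤ (K + 1) * Real.exp (M + 1/K) * Real.exp (-(1/K) * (t - τ)) * g τ := by
  intro τ hτ t hτt
  have hK0 : 0 < K := lt_of_lt_of_le one_pos hK
  have hgτ : 0 < g τ := hgpos τ hτ
  have hinv_cont : ContinuousOn (fun s => (g s)⁻¹) (Set.Ici 0) :=
    hgc.inv₀ (fun s hs => ne_of_gt (hgpos s hs))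
  have hnear : ∀ s, τ ≤ s → s ≤ τ + 1 → g s ≤ g τ * Real.exp M := by
    intro s h1 h2
    refine (hup τ s hτ h1).trans ?_
    have : Real.exp (M * (s - τ)) ≤ Real.exp M := by
      apply Real.exp_le_exp.2; nlinarith
    nlinarith [hgτ.le]
  rcases le_or_gt t (τ + 1) with hcase | hcase
  · have h1 : g t ≤ Real.exp M * g τ := by
      have := hnear t hτt hcase; linarith [this]
    refine h1.trans ?_
    have he1 : Real.exp (-(1/K)) ≤ Real.exp (-(1/K) * (t - τ)) := by
      apply Real.exp_le_exp.2
      have h1K : 0 < 1/K := by positivity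
      nlinarith
    have heq : Real.exp M = Real.exp (M + 1/K) * Real.exp (-(1/K)) := by
      rw [← Real.exp_add]; ring_nf
    rw [heq]
    have step1 : Real.exp (M + 1/K) * Real.exp (-(1/K)) * g τ
        ≤ Real.exp (M + 1/K) * Real.exp (-(1/K) * (t - τ)) * g τ := by
      have := mul_le_mul_of_nonneg_left he1 (Real.exp_pos (M + 1/K)).le
      nlinarith [hgτ.le]
    refine step1.trans ?_
    have hXpos : 0 < Real.exp (M + 1/K) * Real.exp (-(1/K) * (t - τ)) * g τ := by positivity
    nlinarith [mul_nonneg hK0.le hXpos.le]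
  · -- main regime : t > τ + 1
    set r : ℝ → ℝ := fun u => ∫ s in τ..u, (g s)⁻¹ with hrdef
    have hrderiv : ∀ u ∈ Set.Ici (0:ℝ), HasDerivWithinAt r ((g u)⁻¹) (Set.Ici 0) u :=
      fun u hu => pm_ftc_deriv hinv_cont hτ hu
    have hrcont : ContinuousOn r (Set.Ici τ) :=
      fun u hu => ((hrderiv u (Set.mem_Ici.2 (le_trans (Set.mem_Ici.1 hτ) (Set.mem_Ici.1 hu)))).continuousWithinAt).mono
        (Set.Ici_subset_Ici.2 hτ)
    have hrnonneg : ∀ u, τ ≤ u → 0 ≤ r u := by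
      intro u hu
      apply intervalIntegral.integral_nonneg hu
      intro s hs
      exact (inv_nonneg).2 (hgpos s (le_trans hτ hs.1)).le
    set q : ℝ → ℝ := fun u => r u * Real.exp (-1 * (u/K)) with hqdef
    have hqderiv : ∀ u ∈ interior (Set.Ici τ),
        HasDerivAt q ((g u)⁻¹ * Real.exp (-1 * (u/K)) + r u * (Real.exp (-1 * (u/K)) * (-1/K))) u := by
      intro u hu
      rw [interior_Ici] at hu
      have hu0 : (0:ℝ) < u := lt_of_le_of_lt hτ hu
      have hr : HasDerivAt r ((g u)⁻¹) u :=
        (hrderiv u hu0.le).hasDerivAt (Ici_mem_nhds hu0)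
      exact hr.mul (pm_exp_deriv (ne_of_gt hK0) (-1) u)
    have hqmono : MonotoneOn q (Set.Ici τ) := by
      apply monotoneOn_of_deriv_nonneg (convex_Ici τ)
      · exact hrcont.mul (Real.continuous_exp.comp (by continuity)).continuousOn
      · exact fun u hu => (hqderiv u hu).differentiableAt.differentiableWithinAt
      · intro u hu
        rw [(hqderiv u hu).deriv]
        rw [interior_Ici] at hu
        have hu0 : (0:ℝ) < u := lt_of_le_of_lt hτ hu
        have hru : r u * g u ≤ K := hkey τ hτ u hu.le
        have hgu : 0 < g u := hgpos u hu0.le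
        have h2 : r u / K ≤ (g u)⁻¹ := by
          rw [div_le_iff₀ hK0, inv_mul_eq_div, le_div_iff₀ hgu]
          nlinarith [hrnonneg u hu.le]
        have hexp_pos : (0:ℝ) < Real.exp (-1 * (u/K)) := Real.exp_pos _
        have heq : (g u)⁻¹ * Real.exp (-1 * (u/K)) + r u * (Real.exp (-1 * (u/K)) * (-1/K))
            = ((g u)⁻¹ - r u / K) * Real.exp (-1 * (u/K)) := by ring
        rw [heq]
        have := sub_nonneg.2 h2
        positivity
    have hr1 : Real.exp (-M) / g τ ≤ r (τ + 1) := by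
      have hle : ∀ s ∈ Set.Icc τ (τ+1), Real.exp (-M) / g τ ≤ (g s)⁻¹ := by
        intro s hs
        have hgs : g s ≤ g τ * Real.exp M := hnear s hs.1 hs.2
        have hgs0 : 0 < g s := hgpos s (le_trans hτ hs.1)
        have h3 : (g τ * Real.exp M)⁻¹ ≤ (g s)⁻¹ := by
          apply inv_anti₀ hgs0 hgs
        refine le_trans (le_of_eq ?_) h3
        rw [Real.exp_neg, div_eq_mul_inv, mul_inv]
        ring
      have hint1 : IntervalIntegrable (fun _ : ℝ => Real.exp (-M) / g τ) volume τ (τ+1) :=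
        intervalIntegrable_const
      have hint2 : IntervalIntegrable (fun s => (g s)⁻¹) volume τ (τ+1) := by
        apply hinv_cont.mono ?_ |>.intervalIntegrable
        rw [Set.uIcc_of_le (by linarith : τ ≤ τ + 1)]
        exact fun u hu => le_trans hτ hu.1
      have := intervalIntegral.integral_mono_on (by linarith : τ ≤ τ+1) hint1 hint2 hle
      simpa using this
    -- monotonicity: r t ≥ r(τ+1) * exp((t - τ - 1)/K)
    have hq1t : q (τ+1) ≤ q t :=
      hqmono (Set.mem_Ici.2 (by linarith)) (Set.mem_Ici.2 (by linarith)) (le_of_lt hcase)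
    have hrt_low : Real.exp (-M) / g τ * Real.exp ((t - τ - 1)/K) ≤ r t := by
      have hexpt : (0:ℝ) < Real.exp (t/K) := Real.exp_pos _
      have h2 := mul_le_mul_of_nonneg_right hq1t hexpt.le
      have e1 : Real.exp (-1*((τ+1)/K)) * Real.exp (t/K) = Real.exp ((t - τ - 1)/K) := by
        rw [← Real.exp_add]; congr 1; field_simp; ring
      have e2 : Real.exp (-1*(t/K)) * Real.exp (t/K) = 1 := by
        rw [← Real.exp_add]; simp
      simp only [hqdef] at h2
      rw [mul_assoc, mul_assoc, e1, e2, mul_one] at h2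
      calc Real.exp (-M) / g τ * Real.exp ((t - τ - 1)/K)
          ≤ r (τ+1) * Real.exp ((t - τ - 1)/K) :=
            mul_le_mul_of_nonneg_right hr1 (Real.exp_pos _).le
        _ ≤ r t := h2
    set ρ : ℝ := Real.exp (-M) / g τ * Real.exp ((t - τ - 1)/K) with hρdef
    have hρpos : 0 < ρ := by positivity
    have hgt0 : 0 < g t := hgpos t (le_trans (Set.mem_Ici.1 hτ) hτt)
    have hkt : r t * g t ≤ K := hkey τ hτ t (by linarith)
    have hgt : g t ≤ K / ρ := by
      rw [le_div_iff₀ hρpos]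
      nlinarith [mul_le_mul_of_nonneg_left hrt_low hgt0.le]
    refine hgt.trans ?_
    have hKρ : K / ρ = K * (Real.exp (M + 1/K) * Real.exp (-(1/K)*(t-τ))) * g τ := by
      have hsplit : Real.exp (M + 1/K) * Real.exp (-(1/K)*(t-τ))
          = Real.exp M * Real.exp (-((t - τ - 1)/K)) := by
        rw [← Real.exp_add, ← Real.exp_add]; congr 1; field_simp; ring
      rw [hsplit, hρdef, Real.exp_neg M, Real.exp_neg ((t-τ-1)/K)]
      field_simp
    rw [hKρ]
    have hpos : 0 < Real.exp (M + 1/K) * Real.exp (-(1/K)*(t-τ)) * g τ := by positivity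
    nlinarith [hpos]

/-- Backward: if `g(t) ∫_t^τ g⁻¹ ≤ K` then `g` decays exponentially backward. -/
lemma pm_expV {g : ℝ → ℝ} {K M : ℝ} (hK : 1 ≤ K) (hM : 0 ≤ M)
    (hgc : ContinuousOn g (Set.Ici 0)) (hgpos : ∀ t ∈ Set.Ici (0:ℝ), 0 < g t)
    (hdown : ∀ u v : ℝ, 0 ≤ u → u ≤ v → g u ≤ g v * Real.exp (M * (v - u)))
    (hkey : ∀ τ ∈ Set.Ici (0:ℝ), ∀ t ∈ Set.Icc (0:ℝ) τ, (∫ s in t..τ, (g s)⁻¹) * g t ≤ K) :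
    ∀ τ ∈ Set.Ici (0:ℝ), ∀ t ∈ Set.Icc (0:ℝ) τ,
      g t ≤ (K + 1) * Real.exp (M + 1/K) * Real.exp (-(1/K) * (τ - t)) * g τ := by
  intro τ hτ t htm
  obtain ⟨ht0, htτ⟩ := htm
  have hK0 : 0 < K := lt_of_lt_of_le one_pos hK
  have hgτ : 0 < g τ := hgpos τ hτ
  have hinv_cont : ContinuousOn (fun s => (g s)⁻¹) (Set.Ici 0) :=
    hgc.inv₀ (fun s hs => ne_of_gt (hgpos s hs))
  have hnear : ∀ s, 0 ≤ s → τ - 1 ≤ s → s ≤ τ → g s ≤ g τ * Real.exp M := by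
    intro s h0 h1 h2
    refine (hdown s τ h0 h2).trans ?_
    have : Real.exp (M * (τ - s)) ≤ Real.exp M := by
      apply Real.exp_le_exp.2; nlinarith
    nlinarith [hgτ.le]
  rcases le_or_gt (τ - 1) t with hcase | hcase
  · have h1 : g t ≤ Real.exp M * g τ := by
      have := hnear t ht0 hcase htτ; linarith
    refine h1.trans ?_
    have he1 : Real.exp (-(1/K)) ≤ Real.exp (-(1/K) * (τ - t)) := by
      apply Real.exp_le_exp.2
      have h1K : 0 < 1/K := by positivity
      nlinarith
    have heq : Real.exp M = Real.exp (M + 1/K) * Real.exp (-(1/K)) := by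
      rw [← Real.exp_add]; ring_nf
    rw [heq]
    have step1 : Real.exp (M + 1/K) * Real.exp (-(1/K)) * g τ
        ≤ Real.exp (M + 1/K) * Real.exp (-(1/K) * (τ - t)) * g τ := by
      have := mul_le_mul_of_nonneg_left he1 (Real.exp_pos (M + 1/K)).le
      nlinarith [hgτ.le]
    refine step1.trans ?_
    have hXpos : 0 < Real.exp (M + 1/K) * Real.exp (-(1/K) * (τ - t)) * g τ := by positivity
    nlinarith [mul_nonneg hK0.le hXpos.le]
  · -- main regime : t < τ - 1
    set r : ℝ → ℝ := fun u => -∫ s in τ..u, (g s)⁻¹ with hrdef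
    have hrval : ∀ u, r u = ∫ s in u..τ, (g s)⁻¹ := by
      intro u
      show -∫ s in τ..u, (g s)⁻¹ = ∫ s in u..τ, (g s)⁻¹
      rw [intervalIntegral.integral_symm u τ, neg_neg]
    have hrderiv : ∀ u ∈ Set.Ici (0:ℝ), HasDerivWithinAt r (-(g u)⁻¹) (Set.Ici 0) u :=
      fun u hu => (pm_ftc_deriv hinv_cont hτ hu).neg
    have hrcont : ContinuousOn r (Set.Icc 0 τ) :=
      fun u hu => ((hrderiv u hu.1).continuousWithinAt).mono (fun v hv => hv.1)
    have hrnonneg : ∀ u, 0 ≤ u → u ≤ τ → 0 ≤ r u := by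
      intro u hu huτ
      rw [hrval]
      apply intervalIntegral.integral_nonneg huτ
      intro s hs
      exact (inv_nonneg).2 (hgpos s (le_trans hu hs.1)).le
    set q : ℝ → ℝ := fun u => r u * Real.exp (1 * (u/K)) with hqdef
    have hqderiv : ∀ u ∈ interior (Set.Icc (0:ℝ) τ),
        HasDerivAt q (-(g u)⁻¹ * Real.exp (1 * (u/K)) + r u * (Real.exp (1 * (u/K)) * (1/K))) u := by
      intro u hu
      rw [interior_Icc] at hu
      have hr : HasDerivAt r (-(g u)⁻¹) u :=
        (hrderiv u hu.1.le).hasDerivAt (Ici_mem_nhds hu.1)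
      exact hr.mul (pm_exp_deriv (ne_of_gt hK0) 1 u)
    have hqanti : AntitoneOn q (Set.Icc 0 τ) := by
      apply antitoneOn_of_deriv_nonpos (convex_Icc 0 τ)
      · exact hrcont.mul (Real.continuous_exp.comp (by continuity)).continuousOn
      · intro u hu
        exact (hqderiv u hu).differentiableAt.differentiableWithinAt
      · intro u hu
        rw [(hqderiv u hu).deriv]
        rw [interior_Icc] at hu
        have hru : r u * g u ≤ K := by
          rw [hrval]; exact hkey τ hτ u ⟨hu.1.le, hu.2.le⟩
        have hgu : 0 < g u := hgpos u hu.1.le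
        have h2 : r u / K ≤ (g u)⁻¹ := by
          rw [div_le_iff₀ hK0, inv_mul_eq_div, le_div_iff₀ hgu]
          nlinarith [hrnonneg u hu.1.le hu.2.le]
        have heq : -(g u)⁻¹ * Real.exp (1 * (u/K)) + r u * (Real.exp (1 * (u/K)) * (1/K))
            = -(((g u)⁻¹ - r u / K) * Real.exp (1 * (u/K))) := by ring
        rw [heq, neg_nonpos]
        have := sub_nonneg.2 h2
        positivity
    have hτ1 : (0:ℝ) ≤ τ - 1 := by linarith
    have hr1 : Real.exp (-M) / g τ ≤ r (τ - 1) := by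
      have hle : ∀ s ∈ Set.Icc (τ-1) τ, Real.exp (-M) / g τ ≤ (g s)⁻¹ := by
        intro s hs
        have hgs : g s ≤ g τ * Real.exp M := hnear s (le_trans hτ1 hs.1) hs.1 hs.2
        have hgs0 : 0 < g s := hgpos s (le_trans hτ1 hs.1)
        have h3 : (g τ * Real.exp M)⁻¹ ≤ (g s)⁻¹ := inv_anti₀ hgs0 hgs
        refine le_trans (le_of_eq ?_) h3
        rw [Real.exp_neg, div_eq_mul_inv, mul_inv]
        ring
      have hint1 : IntervalIntegrable (fun _ : ℝ => Real.exp (-M) / g τ) volume (τ-1) τ :=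
        intervalIntegrable_const
      have hint2 : IntervalIntegrable (fun s => (g s)⁻¹) volume (τ-1) τ := by
        apply hinv_cont.mono ?_ |>.intervalIntegrable
        rw [Set.uIcc_of_le (by linarith : τ - 1 ≤ τ)]
        exact fun u hu => le_trans hτ1 hu.1
      have := intervalIntegral.integral_mono_on (by linarith : τ - 1 ≤ τ) hint1 hint2 hle
      rw [hrval]
      simpa using this
    have hq1t : q (τ-1) ≤ q t :=
      hqanti (Set.mem_Icc.2 ⟨ht0, htτ⟩) (Set.mem_Icc.2 ⟨hτ1, by linarith⟩) (le_of_lt hcase)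
    have hrt_low : Real.exp (-M) / g τ * Real.exp ((τ - 1 - t)/K) ≤ r t := by
      have hexpt : (0:ℝ) < Real.exp (-(t/K)) := Real.exp_pos _
      have h2 := mul_le_mul_of_nonneg_right hq1t hexpt.le
      have e1 : Real.exp (1*((τ-1)/K)) * Real.exp (-(t/K)) = Real.exp ((τ - 1 - t)/K) := by
        rw [← Real.exp_add]; congr 1; field_simp; ring
      have e2 : Real.exp (1*(t/K)) * Real.exp (-(t/K)) = 1 := by
        rw [← Real.exp_add]; simp
      simp only [hqdef] at h2
      rw [mul_assoc, mul_assoc, e1, e2, mul_one] at h2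
      calc Real.exp (-M) / g τ * Real.exp ((τ - 1 - t)/K)
          ≤ r (τ-1) * Real.exp ((τ - 1 - t)/K) :=
            mul_le_mul_of_nonneg_right hr1 (Real.exp_pos _).le
        _ ≤ r t := h2
    set ρ : ℝ := Real.exp (-M) / g τ * Real.exp ((τ - 1 - t)/K) with hρdef
    have hρpos : 0 < ρ := by positivity
    have hgt0 : 0 < g t := hgpos t ht0
    have hkt : r t * g t ≤ K := by
      rw [hrval]; exact hkey τ hτ t ⟨ht0, htτ⟩
    have hgt : g t ≤ K / ρ := by
      rw [le_div_iff₀ hρpos]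
      nlinarith [mul_le_mul_of_nonneg_left hrt_low hgt0.le]
    refine hgt.trans ?_
    have hKρ : K / ρ = K * (Real.exp (M + 1/K) * Real.exp (-(1/K)*(τ-t))) * g τ := by
      have hsplit : Real.exp (M + 1/K) * Real.exp (-(1/K)*(τ-t))
          = Real.exp M * Real.exp (-((τ - 1 - t)/K)) := by
        rw [← Real.exp_add, ← Real.exp_add]; congr 1; field_simp; ring
      rw [hsplit, hρdef, Real.exp_neg M, Real.exp_neg ((τ-1-t)/K)]
      field_simp
    rw [hKρ]
    have hpos : 0 < Real.exp (M + 1/K) * Real.exp (-(1/K)*(τ-t)) * g τ := by positivity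
    nlinarith [hpos]

end PMAux3

section PMAux4

open MeasureTheory intervalIntegral

variable {n : ℕ} {A Φ : ℝ → Matrix (Fin n) (Fin n) ℝ} {M : ℝ}

/-- `φ` solves the inhomogeneous system with forcing `f` on `[0,∞)`. -/
def pmSol (A : ℝ → Matrix (Fin n) (Fin n) ℝ) (f φ : ℝ → EuclideanSpace ℝ (Fin n)) : Prop :=
  ∀ t ∈ Set.Ici (0:ℝ), HasDerivWithinAt φ (mulE (A t) (φ t) + f t) (Set.Ici 0) t

lemma pmSol.continuousOn {f φ : ℝ → EuclideanSpace ℝ (Fin n)} (h : pmSol A f φ) :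
    ContinuousOn φ (Set.Ici 0) := fun t ht => (h t ht).continuousWithinAt

lemma pmSol.sub_hsol {f φ₁ φ₂ : ℝ → EuclideanSpace ℝ (Fin n)}
    (h1 : pmSol A f φ₁) (h2 : pmSol A f φ₂) : PMHSol A (φ₁ - φ₂) := by
  intro t ht
  have := (h1 t ht).sub (h2 t ht)
  have heq : mulE (A t) (φ₁ t) + f t - (mulE (A t) (φ₂ t) + f t)
      = mulE (A t) ((φ₁ - φ₂) t) := by
    rw [Pi.sub_apply, pm_mulE_sub]; abel
  rwa [heq] at this

/-- Uniqueness of bounded solutions with initial value in a complement of `pmB`. -/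
lemma pm_unique
    (hA : ∀ t ∈ Set.Ici (0:ℝ), ∀ x : EuclideanSpace ℝ (Fin n), ‖mulE (A t) x‖ ≤ M * ‖x‖)
    (hΦ : IsFundamentalOn n A Φ) {W : Submodule ℝ (EuclideanSpace ℝ (Fin n))}
    (hW : IsCompl (pmB n Φ) W) {f φ₁ φ₂ : ℝ → EuclideanSpace ℝ (Fin n)}
    (h1 : pmSol A f φ₁) (hb1 : ∃ C, ∀ t ∈ Set.Ici (0:ℝ), ‖φ₁ t‖ ≤ C) (hw1 : φ₁ 0 ∈ W)
    (h2 : pmSol A f φ₂) (hb2 : ∃ C, ∀ t ∈ Set.Ici (0:ℝ), ‖φ₂ t‖ ≤ C) (hw2 : φ₂ 0 ∈ W) :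
    ∀ t ∈ Set.Ici (0:ℝ), φ₁ t = φ₂ t := by
  obtain ⟨C₁, hC₁⟩ := hb1
  obtain ⟨C₂, hC₂⟩ := hb2
  have hd : PMHSol A (φ₁ - φ₂) := h1.sub_hsol h2
  have hrep := pm_rep hA hΦ hd
  have hmem : (φ₁ - φ₂) 0 ∈ pmB n Φ := by
    refine ⟨C₁ + C₂, fun t ht => ?_⟩
    rw [← hrep t ht, Pi.sub_apply]
    exact (norm_sub_le _ _).trans (add_le_add (hC₁ t ht) (hC₂ t ht))
  have hmemW : (φ₁ - φ₂) 0 ∈ W := by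
    rw [Pi.sub_apply]; exact sub_mem hw1 hw2
  have hzero : (φ₁ - φ₂) 0 = 0 := by
    have := hW.disjoint
    rw [Submodule.disjoint_def] at this
    exact this _ hmem hmemW
  intro t ht
  have := hrep t ht
  rw [hzero, pm_mulE_zero] at this
  have h4 : φ₁ t - φ₂ t = 0 := by rw [← Pi.sub_apply]; exact this
  exact sub_eq_zero.1 h4
  
/-- The bounded extension of a bounded continuous function on `[0,∞)` to `ℝ`. -/
noncomputable def pmExt {n : ℕ} (f : BoundedContinuousFunction (Set.Ici (0:ℝ)) (EuclideanSpace ℝ (Fin n))) :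
    ℝ → EuclideanSpace ℝ (Fin n) := fun t => f ⟨max t 0, le_max_right t 0⟩

lemma pmExt_eq (f : BoundedContinuousFunction (Set.Ici (0:ℝ)) (EuclideanSpace ℝ (Fin n)))
    {t : ℝ} (ht : 0 ≤ t) : pmExt f t = f ⟨t, ht⟩ := by
  unfold pmExt
  congr 1
  exact Subtype.ext (max_eq_left ht)

lemma pmExt_cont (f : BoundedContinuousFunction (Set.Ici (0:ℝ)) (EuclideanSpace ℝ (Fin n))) :
    Continuous (pmExt f) := by
  apply f.continuous.comp
  exact Continuous.subtype_mk (continuous_id.max continuous_const) _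

lemma pmExt_bound (f : BoundedContinuousFunction (Set.Ici (0:ℝ)) (EuclideanSpace ℝ (Fin n)))
    (t : ℝ) : ‖pmExt f t‖ ≤ ‖f‖ := f.norm_coe_le_norm _

lemma pmExt_add (f g : BoundedContinuousFunction (Set.Ici (0:ℝ)) (EuclideanSpace ℝ (Fin n)))
    (t : ℝ) : pmExt (f + g) t = pmExt f t + pmExt g t := by
  unfold pmExt; simp

lemma pmExt_smul (c : ℝ) (f : BoundedContinuousFunction (Set.Ici (0:ℝ)) (EuclideanSpace ℝ (Fin n)))
    (t : ℝ) : pmExt (c • f) t = c • pmExt f t := by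
  unfold pmExt; simp

/-- Uniform solvability bound, via the closed graph theorem. -/
lemma pm_uniform (hM : 0 ≤ M)
    (hAc : ContinuousOn A (Set.Ici 0))
    (hA : ∀ t ∈ Set.Ici (0:ℝ), ∀ x : EuclideanSpace ℝ (Fin n), ‖mulE (A t) x‖ ≤ M * ‖x‖)
    (hΦ : IsFundamentalOn n A Φ)
    (hsolv : ∀ f : ℝ → EuclideanSpace ℝ (Fin n), ContinuousOn f (Set.Ici 0) →
      (∃ C : ℝ, ∀ t ∈ Set.Ici (0:ℝ), ‖f t‖ ≤ C) →
      ∃ φ : ℝ → EuclideanSpace ℝ (Fin n),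
        (∀ t ∈ Set.Ici (0:ℝ), HasDerivWithinAt φ (mulE (A t) (φ t) + f t) (Set.Ici 0) t) ∧
        ∃ C : ℝ, ∀ t ∈ Set.Ici (0:ℝ), ‖φ t‖ ≤ C)
    {W : Submodule ℝ (EuclideanSpace ℝ (Fin n))} (hW : IsCompl (pmB n Φ) W) :
    ∃ K : ℝ, 1 ≤ K ∧ ∀ f : ℝ → EuclideanSpace ℝ (Fin n), ContinuousOn f (Set.Ici 0) →
      (∀ t ∈ Set.Ici (0:ℝ), ‖f t‖ ≤ 1) →
      ∃ φ : ℝ → EuclideanSpace ℝ (Fin n), pmSol A f φ ∧ φ 0 ∈ W ∧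
        ∀ t ∈ Set.Ici (0:ℝ), ‖φ t‖ ≤ K := by
  classical
  -- existence of bounded solutions with initial value in W, for every bounded continuous f
  have hex : ∀ f : BoundedContinuousFunction (Set.Ici (0:ℝ)) (EuclideanSpace ℝ (Fin n)),
      ∃ φ : ℝ → EuclideanSpace ℝ (Fin n), pmSol A (pmExt f) φ ∧
        (∃ C, ∀ t ∈ Set.Ici (0:ℝ), ‖φ t‖ ≤ C) ∧ φ 0 ∈ W := by
    intro f
    obtain ⟨φ₀, hφ₀d, C₀, hC₀⟩ := hsolv (pmExt f) (pmExt_cont f).continuousOn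
      ⟨‖f‖, fun t _ => pmExt_bound f t⟩
    have hmem : φ₀ 0 ∈ pmB n Φ ⊔ W := by
      rw [hW.sup_eq_top]; trivial
    obtain ⟨b, hb, w, hw, hbw⟩ := Submodule.mem_sup.1 hmem
    obtain ⟨Cb, hCb⟩ := hb
    refine ⟨φ₀ - (fun t => mulE (Φ t) b), ?_, ⟨C₀ + Cb, ?_⟩, ?_⟩
    · intro t ht
      have := (hφ₀d t ht).sub (hΦ.2 t ht b)
      have heq : mulE (A t) (φ₀ t) + pmExt f t - mulE (A t) (mulE (Φ t) b)
          = mulE (A t) ((φ₀ - fun t => mulE (Φ t) b) t) + pmExt f t := by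
        rw [Pi.sub_apply, pm_mulE_sub]; abel
      rwa [heq] at this
    · intro t ht
      rw [Pi.sub_apply]
      exact (norm_sub_le _ _).trans (add_le_add (hC₀ t ht) (hCb t ht))
    · have h0 : φ₀ 0 - mulE (Φ 0) b = w := by
        rw [hΦ.1, pm_mulE_one, ← hbw]; abel
      show φ₀ 0 - mulE (Φ 0) b ∈ W
      rw [h0]; exact hw
  choose sol hsol using hex
  have hsolb : ∀ f, ∀ u : Set.Ici (0:ℝ), ‖sol f u‖ ≤ (hsol f).2.1.choose :=
    fun f u => (hsol f).2.1.choose_spec u u.2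
  have hsolcont : ∀ f, Continuous (fun u : Set.Ici (0:ℝ) => sol f u) :=
    fun f => ContinuousOn.restrict ((hsol f).1.continuousOn)
  -- the solution operator as a linear map between Banach spaces
  let TL : BoundedContinuousFunction (Set.Ici (0:ℝ)) (EuclideanSpace ℝ (Fin n)) →ₗ[ℝ]
      BoundedContinuousFunction (Set.Ici (0:ℝ)) (EuclideanSpace ℝ (Fin n)) :=
    { toFun := fun f => BoundedContinuousFunction.ofNormedAddCommGroup
        (fun u : Set.Ici (0:ℝ) => sol f u) (hsolcont f) _ (hsolb f)
      map_add' := by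
        intro f g
        apply BoundedContinuousFunction.ext
        intro u
        have hs : pmSol A (pmExt (f + g)) (sol f + sol g) := by
          intro t ht
          have := ((hsol f).1 t ht).add ((hsol g).1 t ht)
          have heq : mulE (A t) (sol f t) + pmExt f t + (mulE (A t) (sol g t) + pmExt g t)
              = mulE (A t) ((sol f + sol g) t) + pmExt (f + g) t := by
            rw [Pi.add_apply, pm_mulE_add, pmExt_add]; abel
          rwa [heq] at this
        obtain ⟨Cf, hCf⟩ := (hsol f).2.1
        obtain ⟨Cg, hCg⟩ := (hsol g).2.1
        have := pm_unique hA hΦ hW (hsol (f+g)).1 (hsol (f+g)).2.1 (hsol (f+g)).2.2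
          hs ⟨Cf + Cg, fun t ht => by
            rw [Pi.add_apply]
            exact (norm_add_le _ _).trans (add_le_add (hCf t ht) (hCg t ht))⟩
          (by rw [Pi.add_apply]; exact add_mem (hsol f).2.2 (hsol g).2.2)
          u.1 u.2
        simpa using this
      map_smul' := by
        intro c f
        apply BoundedContinuousFunction.ext
        intro u
        have hs : pmSol A (pmExt (c • f)) (c • sol f) := by
          intro t ht
          have := ((hsol f).1 t ht).const_smul c
          have heq : c • (mulE (A t) (sol f t) + pmExt f t)
              = mulE (A t) ((c • sol f) t) + pmExt (c • f) t := by
            rw [Pi.smul_apply, pm_mulE_smul, pmExt_smul, smul_add]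
          rwa [heq] at this
        obtain ⟨Cf, hCf⟩ := (hsol f).2.1
        have := pm_unique hA hΦ hW (hsol (c • f)).1 (hsol (c • f)).2.1 (hsol (c • f)).2.2
          hs ⟨|c| * Cf, fun t ht => by
            rw [Pi.smul_apply, norm_smul]
            exact mul_le_mul_of_nonneg_left (hCf t ht) (abs_nonneg c)⟩
          (by rw [Pi.smul_apply]; exact Submodule.smul_mem W c (hsol f).2.2)
          u.1 u.2
        simpa using this }
  have hTLcoe : ∀ f u, (TL f) u = sol f u := fun f u => rfl
  -- closed graph
  have hTcont : Continuous TL := by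
    apply TL.continuous_of_seq_closed_graph
    intro u x y hux huy
    -- pointwise convergence
    have hptTL : ∀ p : Set.Ici (0:ℝ),
        Filter.Tendsto (fun j => sol (u j) p) Filter.atTop (nhds (y p)) := by
      intro p
      have := (continuous_eval_const
        (x := p)).tendsto (y) |>.comp huy
      exact this
    have hptx : ∀ p : Set.Ici (0:ℝ),
        Filter.Tendsto (fun j => (u j) p) Filter.atTop (nhds (x p)) := by
      intro p
      exact (continuous_eval_const (x := p)).tendsto (x) |>.comp hux
    have hdTL : Filter.Tendsto (fun j => dist (TL (u j)) y) Filter.atTop (nhds 0) :=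
      tendsto_iff_dist_tendsto_zero.1 huy
    have hdx : Filter.Tendsto (fun j => dist (u j) x) Filter.atTop (nhds 0) :=
      tendsto_iff_dist_tendsto_zero.1 hux
    set Y : ℝ → EuclideanSpace ℝ (Fin n) := pmExt y with hYdef
    have hYcont : ContinuousOn Y (Set.Ici 0) := (pmExt_cont y).continuousOn
    set G : ℝ → EuclideanSpace ℝ (Fin n) := fun s => mulE (A s) (Y s) + pmExt x s with hGdef
    have hGcont : ContinuousOn G (Set.Ici 0) :=
      (pm_mulE_contOn hAc hYcont).add (pmExt_cont x).continuousOn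
    -- integral identity in the limit
    have hlimid : ∀ t ∈ Set.Ici (0:ℝ), Y t = Y 0 + ∫ s in (0:ℝ)..t, G s := by
      intro t ht
      have hidj : ∀ j, sol (u j) t - sol (u j) 0
          = ∫ s in (0:ℝ)..t, (mulE (A s) (sol (u j) s) + pmExt (u j) s) := by
        intro j
        have hGj : ContinuousOn (fun s => mulE (A s) (sol (u j) s) + pmExt (u j) s)
            (Set.Ici 0) :=
          (pm_mulE_contOn hAc (hsol (u j)).1.continuousOn).add (pmExt_cont (u j)).continuousOn
        exact (pm_ftc_eval hGj ((hsol (u j)).1) ht).symm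
      -- convergence of integrals
      have hInt : Filter.Tendsto
          (fun j => ∫ s in (0:ℝ)..t, (mulE (A s) (sol (u j) s) + pmExt (u j) s))
          Filter.atTop (nhds (∫ s in (0:ℝ)..t, G s)) := by
        rw [tendsto_iff_dist_tendsto_zero]
        have hbnd : ∀ j, dist (∫ s in (0:ℝ)..t, (mulE (A s) (sol (u j) s) + pmExt (u j) s))
            (∫ s in (0:ℝ)..t, G s) ≤ (M * dist (TL (u j)) y + dist (u j) x) * t := by
          intro j
          have hGj : ContinuousOn (fun s => mulE (A s) (sol (u j) s) + pmExt (u j) s)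
              (Set.Ici 0) :=
            (pm_mulE_contOn hAc (hsol (u j)).1.continuousOn).add (pmExt_cont (u j)).continuousOn
          have hint1 : IntervalIntegrable
              (fun s => mulE (A s) (sol (u j) s) + pmExt (u j) s) volume 0 t := by
            apply (hGj.mono ?_).intervalIntegrable
            rw [Set.uIcc_of_le ht]; exact fun v hv => hv.1
          have hint2 : IntervalIntegrable G volume 0 t := by
            apply (hGcont.mono ?_).intervalIntegrable
            rw [Set.uIcc_of_le ht]; exact fun v hv => hv.1
          rw [dist_eq_norm, ← intervalIntegral.integral_sub hint1 hint2]
          have := intervalIntegral.norm_integral_le_of_norm_le_const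
            (C := M * dist (TL (u j)) y + dist (u j) x)
            (f := fun s => (mulE (A s) (sol (u j) s) + pmExt (u j) s) - G s)
            (a := 0) (b := t) ?_
          · calc ‖∫ s in (0:ℝ)..t, ((mulE (A s) (sol (u j) s) + pmExt (u j) s) - G s)‖
                ≤ (M * dist (TL (u j)) y + dist (u j) x) * |t - 0| := this
              _ = (M * dist (TL (u j)) y + dist (u j) x) * t := by
                  rw [sub_zero, abs_of_nonneg ht]
          · intro s hs
            rw [Set.uIoc_of_le ht] at hs
            have hs0 : (0:ℝ) ≤ s := le_of_lt hs.1
            show ‖mulE (A s) (sol (u j) s) + pmExt (u j) s - G s‖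
              ≤ M * dist (TL (u j)) y + dist (u j) x
            have heq2 : (mulE (A s) (sol (u j) s) + pmExt (u j) s) - G s
                = mulE (A s) (sol (u j) s - Y s) + (pmExt (u j) s - pmExt x s) := by
              rw [hGdef, pm_mulE_sub]; exact add_sub_add_comm _ _ _ _
            rw [heq2]
            refine (norm_add_le _ _).trans (add_le_add ?_ ?_)
            · refine (hA s hs0 _).trans ?_
              apply mul_le_mul_of_nonneg_left ?_ hM
              have h5 : sol (u j) s = (TL (u j)) ⟨s, hs0⟩ := rfl
              have h6 : Y s = y ⟨s, hs0⟩ := pmExt_eq y hs0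
              rw [h5, h6, ← dist_eq_norm]
              exact BoundedContinuousFunction.dist_coe_le_dist _
            · have h7 : pmExt (u j) s - pmExt x s
                  = (u j) ⟨max s 0, le_max_right s 0⟩ - x ⟨max s 0, le_max_right s 0⟩ := rfl
              rw [h7, ← dist_eq_norm]
              exact BoundedContinuousFunction.dist_coe_le_dist _
        apply squeeze_zero (fun j => dist_nonneg) hbnd
        have : Filter.Tendsto (fun j => (M * dist (TL (u j)) y + dist (u j) x) * t)
            Filter.atTop (nhds ((M * 0 + 0) * t)) := by
          apply Filter.Tendsto.mul_const
          exact ((hdTL.const_mul M).add hdx)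
        simpa using this
      have hLHS : Filter.Tendsto (fun j => sol (u j) t - sol (u j) 0) Filter.atTop
          (nhds (Y t - Y 0)) := by
        have h8 : Y t = y ⟨t, ht⟩ := pmExt_eq y ht
        have h9 : Y 0 = y (⟨0, Set.self_mem_Ici⟩ : Set.Ici (0:ℝ)) := pmExt_eq y le_rfl
        rw [h8, h9]
        exact (hptTL ⟨t, ht⟩).sub (hptTL (⟨0, Set.self_mem_Ici⟩ : Set.Ici (0:ℝ)))
      have := tendsto_nhds_unique (hLHS) (by
        apply hInt.congr
        intro j
        exact (hidj j).symm)
      rw [← this]; abel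
    -- conclude : Y solves, is bounded, starts in W
    have hYsol : pmSol A (pmExt x) Y := by
      intro t ht
      have base : HasDerivWithinAt (fun v => Y 0 + ∫ s in (0:ℝ)..v, G s) (G t) (Set.Ici 0) t :=
        (pm_ftc_deriv hGcont le_rfl ht).const_add (Y 0)
      have := base.congr (fun v hv => (hlimid v hv)) (hlimid t ht)
      exact this
    have hYb : ∃ C, ∀ t ∈ Set.Ici (0:ℝ), ‖Y t‖ ≤ C := ⟨‖y‖, fun t _ => pmExt_bound y t⟩
    have hYW : Y 0 ∈ W := by
      have hcl : IsClosed (W : Set (EuclideanSpace ℝ (Fin n))) :=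
        Submodule.closed_of_finiteDimensional W
      have h9 : Y 0 = y (⟨0, Set.self_mem_Ici⟩ : Set.Ici (0:ℝ)) := pmExt_eq y le_rfl
      rw [h9]
      exact hcl.mem_of_tendsto (hptTL (⟨0, Set.self_mem_Ici⟩ : Set.Ici (0:ℝ)))
        (Filter.Eventually.of_forall (fun j => (hsol (u j)).2.2))
    apply BoundedContinuousFunction.ext
    intro p
    have := pm_unique hA hΦ hW hYsol hYb hYW
      (hsol x).1 (hsol x).2.1 (hsol x).2.2 p.1 p.2
    have h10 : Y p.1 = y p := by rw [hYdef, pmExt_eq y p.2]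
    rw [hTLcoe]
    rw [← h10]
    exact this
  -- operator norm bound
  let Tc : BoundedContinuousFunction (Set.Ici (0:ℝ)) (EuclideanSpace ℝ (Fin n)) →L[ℝ]
      BoundedContinuousFunction (Set.Ici (0:ℝ)) (EuclideanSpace ℝ (Fin n)) := ⟨TL, hTcont⟩
  refine ⟨max ‖Tc‖ 1, le_max_right _ _, ?_⟩
  intro f hfc hfb
  set fX : BoundedContinuousFunction (Set.Ici (0:ℝ)) (EuclideanSpace ℝ (Fin n)) :=
    BoundedContinuousFunction.ofNormedAddCommGroup (fun u : Set.Ici (0:ℝ) => f u)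
      (ContinuousOn.restrict hfc) 1 (fun u => hfb u u.2) with hfXdef
  have hfXnorm : ‖fX‖ ≤ 1 :=
    BoundedContinuousFunction.norm_ofNormedAddCommGroup_le _ zero_le_one _
  have hfXval : ∀ t (ht : 0 ≤ t), pmExt fX t = f t := by
    intro t ht
    rw [pmExt_eq fX ht]
    rfl
  refine ⟨sol fX, ?_, (hsol fX).2.2, ?_⟩
  · intro t ht
    have := (hsol fX).1 t ht
    rwa [hfXval t ht] at this
  · intro t ht
    have h11 : sol fX t = (TL fX) ⟨t, ht⟩ := rfl
    rw [h11]
    calc ‖(TL fX) ⟨t, ht⟩‖ ≤ ‖TL fX‖ := BoundedContinuousFunction.norm_coe_le_norm _ _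
      _ = ‖Tc fX‖ := rfl
      _ ≤ ‖Tc‖ * ‖fX‖ := Tc.le_opNorm fX
      _ ≤ max ‖Tc‖ 1 * 1 := by
          apply mul_le_mul (le_max_left _ _) hfXnorm (norm_nonneg _)
          exact le_trans (norm_nonneg Tc) (le_max_left _ _)
      _ = max ‖Tc‖ 1 := mul_one _


end PMAux4

section PMAux5

open MeasureTheory intervalIntegral

variable {n : ℕ} {A Φ : ℝ → Matrix (Fin n) (Fin n) ℝ} {M : ℝ}
variable {W : Submodule ℝ (EuclideanSpace ℝ (Fin n))}

lemma pm_g_pos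
    (hA : ∀ t ∈ Set.Ici (0:ℝ), ∀ x : EuclideanSpace ℝ (Fin n), ‖mulE (A t) x‖ ≤ M * ‖x‖)
    (hΦ : IsFundamentalOn n A Φ) {b : EuclideanSpace ℝ (Fin n)} (hbne : b ≠ 0) :
    ∀ s ∈ Set.Ici (0:ℝ), 0 < ‖mulE (Φ s) b‖ := by
  intro s hs
  rw [norm_pos_iff]
  intro h0
  apply hbne
  have := (pm_hxb hΦ b).eq_zero hA (Set.mem_Ici.1 hs) h0 0 Set.self_mem_Ici
  simpa [hΦ.1, pm_mulE_one] using this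

/-- The key integral inequality for bounded trajectories. -/
lemma pm_keyU (hM : 0 ≤ M)
    (hAc : ContinuousOn A (Set.Ici 0))
    (hA : ∀ t ∈ Set.Ici (0:ℝ), ∀ x : EuclideanSpace ℝ (Fin n), ‖mulE (A t) x‖ ≤ M * ‖x‖)
    (hΦ : IsFundamentalOn n A Φ) (hW : IsCompl (pmB n Φ) W) {K : ℝ}
    (husol : ∀ f : ℝ → EuclideanSpace ℝ (Fin n), ContinuousOn f (Set.Ici 0) →
      (∀ t ∈ Set.Ici (0:ℝ), ‖f t‖ ≤ 1) →
      ∃ φ : ℝ → EuclideanSpace ℝ (Fin n), pmSol A f φ ∧ φ 0 ∈ W ∧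
        ∀ t ∈ Set.Ici (0:ℝ), ‖φ t‖ ≤ K)
    {b : EuclideanSpace ℝ (Fin n)} (hb : b ∈ pmB n Φ) (hbne : b ≠ 0) :
    ∀ a ∈ Set.Ici (0:ℝ), ∀ t, a ≤ t →
      (∫ s in a..t, ‖mulE (Φ s) b‖⁻¹) * ‖mulE (Φ t) b‖ ≤ K := by
  intro a ha t hat
  have ha' : (0:ℝ) ≤ a := ha
  have ht' : (0:ℝ) ≤ t := le_trans ha' hat
  set xb : ℝ → EuclideanSpace ℝ (Fin n) := fun s => mulE (Φ s) b with hxbdef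
  set g : ℝ → ℝ := fun s => ‖xb s‖ with hgdef
  have hgpos : ∀ s ∈ Set.Ici (0:ℝ), 0 < g s := pm_g_pos hA hΦ hbne
  have hxbcont : ContinuousOn xb (Set.Ici 0) := pm_xb_contOn hΦ b
  have hgcont : ContinuousOn g (Set.Ici 0) := hxbcont.norm
  have hginv_cont : ContinuousOn (fun s => (g s)⁻¹) (Set.Ici 0) :=
    hgcont.inv₀ (fun s hs => ne_of_gt (hgpos s hs))
  -- the ramp function
  set ρ : ℝ → ℝ := fun s => max 0 (min 1 (min (s - (a-1)) (t + 1 - s))) with hρdef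
  have hρcont : Continuous ρ := by
    apply continuous_const.max
    exact continuous_const.min ((continuous_id.sub continuous_const).min
      (continuous_const.sub continuous_id))
  have hρ0 : ∀ s, 0 ≤ ρ s := fun s => le_max_left 0 _
  have hρ1 : ∀ s, ρ s ≤ 1 := fun s => max_le zero_le_one (min_le_left _ _)
  have hρone : ∀ s, a ≤ s → s ≤ t → ρ s = 1 := by
    intro s h1 h2
    have : min 1 (min (s - (a-1)) (t + 1 - s)) = 1 := by
      rw [min_eq_left]
      apply le_min <;> [linarith; linarith]
    rw [hρdef]; simp only [this]
    exact max_eq_right zero_le_one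
  have hρzero : ∀ s, t + 1 ≤ s → ρ s = 0 := by
    intro s h1
    apply max_eq_left
    apply le_trans (min_le_right _ _)
    apply le_trans (min_le_right _ _)
    linarith
  -- the test forcing
  set f : ℝ → EuclideanSpace ℝ (Fin n) := fun s => ρ s • ((g s)⁻¹ • xb s) with hfdef
  have hfc : ContinuousOn f (Set.Ici 0) :=
    (hρcont.continuousOn).smul (hginv_cont.smul hxbcont)
  have hfb : ∀ s ∈ Set.Ici (0:ℝ), ‖f s‖ ≤ 1 := by
    intro s hs
    rw [hfdef]
    simp only [norm_smul, Real.norm_eq_abs]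
    rw [abs_of_nonneg (hρ0 s), abs_of_nonneg (inv_nonneg.2 (hgpos s hs).le)]
    rw [inv_mul_cancel₀ (ne_of_gt (hgpos s hs)), mul_one]
    exact hρ1 s
  obtain ⟨φ, hφsol, hφW, hφK⟩ := husol f hfc hfb
  -- the explicit particular solution
  set η : ℝ → ℝ := fun s => ρ s * (g s)⁻¹ with hηdef
  have hηcont : ContinuousOn η (Set.Ici 0) := hρcont.continuousOn.mul hginv_cont
  have hηnn : ∀ s ∈ Set.Ici (0:ℝ), 0 ≤ η s := fun s hs =>
    mul_nonneg (hρ0 s) (inv_nonneg.2 (hgpos s hs).le)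
  set h : ℝ → ℝ := fun v => ∫ s in (0:ℝ)..v, η s with hhdef
  have hsplit : ∀ v₁ v₂ : ℝ, 0 ≤ v₁ → v₁ ≤ v₂ → h v₂ - h v₁ = ∫ s in v₁..v₂, η s := by
    intro v₁ v₂ h1 h2
    have hi1 : IntervalIntegrable η volume 0 v₁ := by
      apply (hηcont.mono ?_).intervalIntegrable
      rw [Set.uIcc_of_le h1]; exact fun u hu => hu.1
    have hi2 : IntervalIntegrable η volume v₁ v₂ := by
      apply (hηcont.mono ?_).intervalIntegrable
      rw [Set.uIcc_of_le h2]; exact fun u hu => le_trans h1 hu.1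
    rw [hhdef]
    simp only []
    rw [← intervalIntegral.integral_add_adjacent_intervals hi1 hi2]
    abel
  have hseg_nn : ∀ v₁ v₂ : ℝ, 0 ≤ v₁ → v₁ ≤ v₂ → 0 ≤ ∫ s in v₁..v₂, η s := by
    intro v₁ v₂ h1 h2
    apply intervalIntegral.integral_nonneg h2
    exact fun s hs => hηnn s (le_trans h1 hs.1)
  have hh0 : h 0 = 0 := intervalIntegral.integral_same
  have hhnn : ∀ v, 0 ≤ v → 0 ≤ h v := by
    intro v hv
    have h1 := hsplit 0 v le_rfl hv
    have h2 := hseg_nn 0 v le_rfl hv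
    rw [hh0] at h1
    linarith
  have hhub : ∀ v, 0 ≤ v → h v ≤ h (t+1) := by
    intro v hv
    rcases le_total v (t+1) with hc | hc
    · have := hsplit v (t+1) hv hc
      have h2 := hseg_nn v (t+1) hv hc
      linarith
    · have := hsplit (t+1) v (by linarith) hc
      have hzero : (∫ s in (t+1)..v, η s) = 0 := by
        rw [intervalIntegral.integral_congr (g := fun _ => (0:ℝ))]
        · exact intervalIntegral.integral_zero
        · intro s hs
          rw [Set.uIcc_of_le hc] at hs
          rw [hηdef]
          simp only []
          rw [hρzero s hs.1, zero_mul]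
      rw [hzero] at this
      linarith
  -- ψ is a solution for the same forcing
  set ψ : ℝ → EuclideanSpace ℝ (Fin n) := fun v => h v • xb v with hψdef
  have hψsol : pmSol A f ψ := by
    intro v hv
    have hd1 : HasDerivWithinAt h (η v) (Set.Ici 0) v := pm_ftc_deriv hηcont le_rfl hv
    have hd2 : HasDerivWithinAt xb (mulE (A v) (xb v)) (Set.Ici 0) v := pm_hxb hΦ b v hv
    have := hd1.smul hd2
    have heq : h v • mulE (A v) (xb v) + η v • xb v = mulE (A v) (ψ v) + f v := by
      rw [hψdef]
      simp only []
      rw [pm_mulE_smul, hfdef]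
      simp only []
      rw [hηdef]
      simp only []
      rw [mul_smul]
    rwa [heq] at this
  have hψ0 : ψ 0 = 0 := by rw [hψdef]; simp only []; rw [hh0, zero_smul]
  obtain ⟨Cb, hCb⟩ := hb
  have hCb0 : 0 < Cb := lt_of_lt_of_le (hgpos 0 Set.self_mem_Ici) (hCb 0 Set.self_mem_Ici)
  have hψb : ∃ C, ∀ v ∈ Set.Ici (0:ℝ), ‖ψ v‖ ≤ C := by
    refine ⟨h (t+1) * Cb, fun v hv => ?_⟩
    rw [hψdef]
    simp only []
    rw [norm_smul, Real.norm_eq_abs, abs_of_nonneg (hhnn v hv)]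
    exact mul_le_mul (hhub v hv) (hCb v hv) (norm_nonneg _) (hhnn (t+1) (by linarith))
  have huniq := pm_unique hA hΦ hW hφsol ⟨K, hφK⟩ hφW hψsol hψb (hψ0 ▸ Submodule.zero_mem W)
  -- pointwise bound for ψ
  have hbound : ∀ v ∈ Set.Ici (0:ℝ), h v * g v ≤ K := by
    intro v hv
    have h1 : ‖ψ v‖ ≤ K := by rw [← huniq v hv]; exact hφK v hv
    rw [hψdef] at h1
    simp only [] at h1
    rw [norm_smul, Real.norm_eq_abs, abs_of_nonneg (hhnn v hv)] at h1
    exact h1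
  -- extract the desired inequality
  have hint_eq : (∫ s in a..t, (g s)⁻¹) = ∫ s in a..t, η s := by
    apply intervalIntegral.integral_congr
    intro s hs
    rw [Set.uIcc_of_le hat] at hs
    rw [hηdef]
    simp only []
    rw [hρone s hs.1 hs.2, one_mul]
  have h3 : (∫ s in a..t, η s) ≤ h t := by
    have := hsplit a t ha' hat
    have h4 := hhnn a ha'
    linarith
  calc (∫ s in a..t, (g s)⁻¹) * ‖mulE (Φ t) b‖
      = (∫ s in a..t, η s) * g t := by rw [hint_eq]
    _ ≤ h t * g t := mul_le_mul_of_nonneg_right h3 (norm_nonneg _)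
    _ ≤ K := hbound t ht'

end PMAux5

section PMAux6

open MeasureTheory intervalIntegral

variable {n : ℕ} {A Φ : ℝ → Matrix (Fin n) (Fin n) ℝ} {M : ℝ}
variable {W : Submodule ℝ (EuclideanSpace ℝ (Fin n))}

/-- The key integral inequality for trajectories in the complement. -/
lemma pm_keyV (hM : 0 ≤ M)
    (hAc : ContinuousOn A (Set.Ici 0))
    (hA : ∀ t ∈ Set.Ici (0:ℝ), ∀ x : EuclideanSpace ℝ (Fin n), ‖mulE (A t) x‖ ≤ M * ‖x‖)
    (hΦ : IsFundamentalOn n A Φ) (hW : IsCompl (pmB n Φ) W) {K : ℝ}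
    (husol : ∀ f : ℝ → EuclideanSpace ℝ (Fin n), ContinuousOn f (Set.Ici 0) →
      (∀ t ∈ Set.Ici (0:ℝ), ‖f t‖ ≤ 1) →
      ∃ φ : ℝ → EuclideanSpace ℝ (Fin n), pmSol A f φ ∧ φ 0 ∈ W ∧
        ∀ t ∈ Set.Ici (0:ℝ), ‖φ t‖ ≤ K)
    {w : EuclideanSpace ℝ (Fin n)} (hw : w ∈ W) (hwne : w ≠ 0) :
    ∀ τ ∈ Set.Ici (0:ℝ), ∀ t ∈ Set.Icc (0:ℝ) τ,
      (∫ s in t..τ, ‖mulE (Φ s) w‖⁻¹) * ‖mulE (Φ t) w‖ ≤ K := by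
  intro τ hτ t htm
  have hτ' : (0:ℝ) ≤ τ := hτ
  obtain ⟨ht0, htτ⟩ := htm
  set xb : ℝ → EuclideanSpace ℝ (Fin n) := fun s => mulE (Φ s) w with hxbdef
  set g : ℝ → ℝ := fun s => ‖xb s‖ with hgdef
  have hgpos : ∀ s ∈ Set.Ici (0:ℝ), 0 < g s := pm_g_pos hA hΦ hwne
  have hxbcont : ContinuousOn xb (Set.Ici 0) := pm_xb_contOn hΦ w
  have hgcont : ContinuousOn g (Set.Ici 0) := hxbcont.norm
  have hginv_cont : ContinuousOn (fun s => (g s)⁻¹) (Set.Ici 0) :=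
    hgcont.inv₀ (fun s hs => ne_of_gt (hgpos s hs))
  -- the down-ramp
  set ρ : ℝ → ℝ := fun s => max 0 (min 1 (τ + 1 - s)) with hρdef
  have hρcont : Continuous ρ :=
    continuous_const.max (continuous_const.min (continuous_const.sub continuous_id))
  have hρ0 : ∀ s, 0 ≤ ρ s := fun s => le_max_left 0 _
  have hρ1 : ∀ s, ρ s ≤ 1 := fun s => max_le zero_le_one (min_le_left _ _)
  have hρone : ∀ s, s ≤ τ → ρ s = 1 := by
    intro s h1
    have : min 1 (τ + 1 - s) = 1 := by rw [min_eq_left]; linarith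
    rw [hρdef]; simp only [this]
    exact max_eq_right zero_le_one
  have hρzero : ∀ s, τ + 1 ≤ s → ρ s = 0 := by
    intro s h1
    apply max_eq_left
    exact le_trans (min_le_right _ _) (by linarith)
  set f : ℝ → EuclideanSpace ℝ (Fin n) := fun s => ρ s • ((g s)⁻¹ • xb s) with hfdef
  have hfc : ContinuousOn f (Set.Ici 0) :=
    (hρcont.continuousOn).smul (hginv_cont.smul hxbcont)
  have hfb : ∀ s ∈ Set.Ici (0:ℝ), ‖f s‖ ≤ 1 := by
    intro s hs
    rw [hfdef]
    simp only [norm_smul, Real.norm_eq_abs]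
    rw [abs_of_nonneg (hρ0 s), abs_of_nonneg (inv_nonneg.2 (hgpos s hs).le)]
    rw [inv_mul_cancel₀ (ne_of_gt (hgpos s hs)), mul_one]
    exact hρ1 s
  obtain ⟨φ, hφsol, hφW, hφK⟩ := husol f hfc hfb
  set η : ℝ → ℝ := fun s => ρ s * (g s)⁻¹ with hηdef
  have hηcont : ContinuousOn η (Set.Ici 0) := hρcont.continuousOn.mul hginv_cont
  have hηnn : ∀ s ∈ Set.Ici (0:ℝ), 0 ≤ η s := fun s hs =>
    mul_nonneg (hρ0 s) (inv_nonneg.2 (hgpos s hs).le)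
  set h : ℝ → ℝ := fun v => ∫ s in (0:ℝ)..v, η s with hhdef
  have hsplit : ∀ v₁ v₂ : ℝ, 0 ≤ v₁ → v₁ ≤ v₂ → h v₂ - h v₁ = ∫ s in v₁..v₂, η s := by
    intro v₁ v₂ h1 h2
    have hi1 : IntervalIntegrable η volume 0 v₁ := by
      apply (hηcont.mono ?_).intervalIntegrable
      rw [Set.uIcc_of_le h1]; exact fun u hu => hu.1
    have hi2 : IntervalIntegrable η volume v₁ v₂ := by
      apply (hηcont.mono ?_).intervalIntegrable
      rw [Set.uIcc_of_le h2]; exact fun u hu => le_trans h1 hu.1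
    rw [hhdef]
    simp only []
    rw [← intervalIntegral.integral_add_adjacent_intervals hi1 hi2]
    abel
  have hseg_nn : ∀ v₁ v₂ : ℝ, 0 ≤ v₁ → v₁ ≤ v₂ → 0 ≤ ∫ s in v₁..v₂, η s := by
    intro v₁ v₂ h1 h2
    apply intervalIntegral.integral_nonneg h2
    exact fun s hs => hηnn s (le_trans h1 hs.1)
  have hh0 : h 0 = 0 := intervalIntegral.integral_same
  have hstat : ∀ v, τ + 1 ≤ v → h v = h (τ+1) := by
    intro v hv
    have h1 := hsplit (τ+1) v (by linarith) hv
    have hzero : (∫ s in (τ+1)..v, η s) = 0 := by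
      rw [intervalIntegral.integral_congr (g := fun _ => (0:ℝ))]
      · exact intervalIntegral.integral_zero
      · intro s hs
        rw [Set.uIcc_of_le hv] at hs
        rw [hηdef]
        simp only []
        rw [hρzero s hs.1, zero_mul]
    rw [hzero] at h1
    linarith
  set ψ : ℝ → EuclideanSpace ℝ (Fin n) := fun v => h v • xb v with hψdef
  have hψsol : pmSol A f ψ := by
    intro v hv
    have hd1 : HasDerivWithinAt h (η v) (Set.Ici 0) v := pm_ftc_deriv hηcont le_rfl hv
    have hd2 : HasDerivWithinAt xb (mulE (A v) (xb v)) (Set.Ici 0) v := pm_hxb hΦ w v hv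
    have := hd1.smul hd2
    have heq : h v • mulE (A v) (xb v) + η v • xb v = mulE (A v) (ψ v) + f v := by
      rw [hψdef]
      simp only []
      rw [pm_mulE_smul, hfdef]
      simp only []
      rw [hηdef]
      simp only []
      rw [mul_smul]
    rwa [heq] at this
  have hψ0 : ψ 0 = 0 := by rw [hψdef]; simp only []; rw [hh0, zero_smul]
  -- e := φ - ψ is a homogeneous solution
  have hehsol : PMHSol A (φ - ψ) := hφsol.sub_hsol hψsol
  have herep := pm_rep hA hΦ hehsol
  have he0 : (φ - ψ) 0 = φ 0 := by rw [Pi.sub_apply, hψ0, sub_zero]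
  -- the combined initial vector z lies in both pmB and W, hence is zero
  set Ginf : ℝ := h (τ+1) with hGdef
  set z : EuclideanSpace ℝ (Fin n) := φ 0 + Ginf • w with hzdef
  have hzval : ∀ v ∈ Set.Ici (0:ℝ), mulE (Φ v) z = (φ - ψ) v + Ginf • xb v := by
    intro v hv
    rw [hzdef, pm_mulE_add, pm_mulE_smul, herep v hv, he0]
  have hzB : z ∈ pmB n Φ := by
    obtain ⟨C₂, hC₂⟩ := (isCompact_Icc (a := (0:ℝ)) (b := τ+1)).exists_bound_of_continuousOn
      ((pm_xb_contOn hΦ z).mono (fun u hu => hu.1))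
    refine ⟨max K C₂, fun v hv => ?_⟩
    rcases le_total v (τ+1) with hc | hc
    · exact le_trans (hC₂ v ⟨hv, hc⟩) (le_max_right _ _)
    · have hv' : v ∈ Set.Ici (0:ℝ) := hv
      rw [hzval v hv']
      have hhv : h v = Ginf := hstat v hc
      have : (φ - ψ) v + Ginf • xb v = φ v := by
        rw [Pi.sub_apply, hψdef]
        simp only []
        rw [hhv]
        abel
      rw [this]
      exact le_trans (hφK v hv') (le_max_left _ _)
  have hzW : z ∈ W := add_mem hφW (Submodule.smul_mem W Ginf hw)
  have hz0 : z = 0 := by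
    have hd := hW.disjoint
    rw [Submodule.disjoint_def] at hd
    exact hd z hzB hzW
  -- hence φ = (h - Ginf) • xb on [0,∞)
  have hφval : ∀ v ∈ Set.Ici (0:ℝ), φ v = (h v - Ginf) • xb v := by
    intro v hv
    have h1 := hzval v hv
    rw [hz0, pm_mulE_zero] at h1
    have h2 : (φ - ψ) v = -(Ginf • xb v) := by
      have := h1.symm
      rw [eq_comm, add_eq_zero_iff_eq_neg] at h1
      exact h1
    rw [Pi.sub_apply, hψdef] at h2
    simp only [] at h2
    have h3 : φ v = h v • xb v - Ginf • xb v := by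
      have := sub_eq_iff_eq_add.1 h2
      rw [this]; abel
    rw [h3, sub_smul]
  -- pointwise bound
  have hbound : ∀ v ∈ Set.Ici (0:ℝ), |h v - Ginf| * g v ≤ K := by
    intro v hv
    have h1 : ‖φ v‖ ≤ K := hφK v hv
    rw [hφval v hv, norm_smul, Real.norm_eq_abs] at h1
    exact h1
  -- extract the inequality
  have hint_eq : (∫ s in t..τ, (g s)⁻¹) = ∫ s in t..τ, η s := by
    apply intervalIntegral.integral_congr
    intro s hs
    rw [Set.uIcc_of_le htτ] at hs
    rw [hηdef]
    simp only []
    rw [hρone s hs.2, one_mul]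
  have h5 : (∫ s in t..τ, η s) ≤ Ginf - h t := by
    have ha1 := hsplit t τ ht0 htτ
    have ha2 := hsplit τ (τ+1) hτ' (by linarith)
    have ha3 := hseg_nn τ (τ+1) hτ' (by linarith)
    rw [hGdef]
    linarith
  have h6 : (∫ s in t..τ, η s) ≤ |h t - Ginf| := by
    refine h5.trans ?_
    rw [abs_sub_comm]
    exact le_abs_self _
  calc (∫ s in t..τ, (g s)⁻¹) * ‖mulE (Φ t) w‖
      = (∫ s in t..τ, η s) * g t := by rw [hint_eq]
    _ ≤ |h t - Ginf| * g t := mul_le_mul_of_nonneg_right h6 (norm_nonneg _)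
    _ ≤ K := hbound t ht0

end PMAux6

/-- Pliss–Maizel theorem. If `A : [0,∞) → M_n(ℝ)` is bounded and
continuous and for every bounded continuous `f` the system `ẋ = A(t)x + f(t)` has at
least one bounded solution on `[0,∞)`, then `ẋ = A(t)x` is hyperbolic. -/
theorem pliss_maizel (n : ℕ)
    (A Φ : ℝ → Matrix (Fin n) (Fin n) ℝ)
    (hAc : ContinuousOn A (Ici 0))
    (hAb : ∃ M : ℝ, ∀ t ∈ Ici (0:ℝ), ∀ x : EuclideanSpace ℝ (Fin n),
      ‖mulE (A t) x‖ ≤ M * ‖x‖)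
    (hΦ : IsFundamentalOn n A Φ)
    (hsolv : ∀ f : ℝ → EuclideanSpace ℝ (Fin n), ContinuousOn f (Ici 0) →
      (∃ M : ℝ, ∀ t ∈ Ici (0:ℝ), ‖f t‖ ≤ M) →
      ∃ φ : ℝ → EuclideanSpace ℝ (Fin n),
        (∀ t ∈ Ici (0:ℝ), HasDerivWithinAt φ (mulE (A t) (φ t) + f t) (Ici 0) t) ∧
        ∃ M : ℝ, ∀ t ∈ Ici (0:ℝ), ‖φ t‖ ≤ M) :
    IsHyperbolic n Φ := by
  classical
  obtain ⟨M₀, hM₀⟩ := hAb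
  set M : ℝ := max M₀ 0 with hMdef
  have hM : 0 ≤ M := le_max_right _ _
  have hA : ∀ t ∈ Ici (0:ℝ), ∀ x : EuclideanSpace ℝ (Fin n), ‖mulE (A t) x‖ ≤ M * ‖x‖ :=
    fun t ht x => (hM₀ t ht x).trans
      (mul_le_mul_of_nonneg_right (le_max_left _ _) (norm_nonneg x))
  obtain ⟨W, hW⟩ := Submodule.exists_isCompl (pmB n Φ)
  obtain ⟨K, hK1, husol⟩ := pm_uniform hM hAc hA hΦ hsolv hW
  have hK0 : 0 < K := lt_of_lt_of_le one_pos hK1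
  set lam : ℝ := 1/K with hlamdef
  set C : ℝ := (K + 1) * Real.exp (M + 1/K) with hCdef
  have hdet : ∀ t : ℝ, 0 ≤ t → IsUnit (Φ t).det := fun t ht => pm_Phi_det_isUnit hA hΦ ht
  have hinj : ∀ t : ℝ, 0 ≤ t →
      Function.Injective (Matrix.toEuclideanLin (Φ t) :
        EuclideanSpace ℝ (Fin n) →ₗ[ℝ] EuclideanSpace ℝ (Fin n)) :=
    fun t ht => pm_Phi_inj hA hΦ ht
  have hmatid : ∀ t τ : ℝ, 0 ≤ τ → Φ t * (Φ τ)⁻¹ * Φ τ = Φ t := by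
    intro t τ hτ
    rw [mul_assoc, Matrix.nonsing_inv_mul _ (hdet τ hτ), mul_one]
  have hmulE_cocycle : ∀ (t τ : ℝ), 0 ≤ τ → ∀ b : EuclideanSpace ℝ (Fin n),
      mulE (Φ t * (Φ τ)⁻¹) (Matrix.toEuclideanLin (Φ τ) b) = mulE (Φ t) b := by
    intro t τ hτ b
    have h1 : (Matrix.toEuclideanLin (Φ τ)) b = mulE (Φ τ) b := rfl
    rw [h1, ← pm_mulE_mul, hmatid t τ hτ]
  refine ⟨fun t => (pmB n Φ).map (Matrix.toEuclideanLin (Φ t)),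
    fun t => W.map (Matrix.toEuclideanLin (Φ t)), C, lam, ?_, ?_, ?_, ?_, ?_, ?_⟩
  · -- 0 < C
    rw [hCdef]; positivity
  · -- 0 < lam
    rw [hlamdef]; positivity
  · -- IsCompl
    intro t ht
    constructor
    · rw [Submodule.disjoint_def]
      rintro x hxU hxV
      obtain ⟨b, hb, hbx⟩ := Submodule.mem_map.1 hxU
      obtain ⟨w, hw, hwx⟩ := Submodule.mem_map.1 hxV
      have hbw : b = w := hinj t ht (by rw [hbx, hwx])
      have hb0 : b = 0 := by
        have hd := hW.disjoint
        rw [Submodule.disjoint_def] at hd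
        exact hd b hb (hbw ▸ hw)
      rw [← hbx, hb0, map_zero]
    · rw [codisjoint_iff, ← Submodule.map_sup, hW.sup_eq_top, Submodule.map_top,
        LinearMap.range_eq_top]
      exact (LinearMap.injective_iff_surjective).1 (hinj t ht)
  · -- invariance
    intro t ht τ hτ
    have hgen : ∀ P : Submodule ℝ (EuclideanSpace ℝ (Fin n)),
        (P.map (Matrix.toEuclideanLin (Φ τ))).map
          (Matrix.toEuclideanLin (Φ t * (Φ τ)⁻¹))
          = P.map (Matrix.toEuclideanLin (Φ t)) := by
      intro P
      rw [← Submodule.map_comp, ← pm_toEuclideanLin_mul, hmatid t τ hτ]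
    exact ⟨hgen _, hgen _⟩
  · -- forward estimate on U
    intro τ hτ t hτt x₀ hx₀
    obtain ⟨b, hb, rfl⟩ := Submodule.mem_map.1 hx₀
    rw [hmulE_cocycle t τ hτ b]
    by_cases hbz : b = 0
    · subst hbz
      simp [pm_mulE_zero, map_zero]
    · have hnorm : ‖(Matrix.toEuclideanLin (Φ τ)) b‖ = ‖mulE (Φ τ) b‖ := rfl
      rw [hnorm]
      have := pm_expU (g := fun s => ‖mulE (Φ s) b‖) hK1 hM
        ((pm_xb_contOn hΦ b).norm) (pm_g_pos hA hΦ hbz)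
        (fun u v hu huv => (pm_hxb hΦ b).grow hA hu huv)
        (pm_keyU hM hAc hA hΦ hW husol hb hbz)
        τ hτ t hτt
      calc ‖mulE (Φ t) b‖
          ≤ (K + 1) * Real.exp (M + 1/K) * Real.exp (-(1/K) * (t - τ)) * ‖mulE (Φ τ) b‖ := this
        _ = C * Real.exp (-lam * (t - τ)) * ‖mulE (Φ τ) b‖ := by
            rw [hCdef, hlamdef]
  · -- backward estimate on V
    intro τ hτ t ht htτ x₀ hx₀
    obtain ⟨w, hw, rfl⟩ := Submodule.mem_map.1 hx₀
    rw [hmulE_cocycle t τ hτ w]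
    by_cases hwz : w = 0
    · subst hwz
      simp [pm_mulE_zero, map_zero]
    · have hnorm : ‖(Matrix.toEuclideanLin (Φ τ)) w‖ = ‖mulE (Φ τ) w‖ := rfl
      rw [hnorm]
      have := pm_expV (g := fun s => ‖mulE (Φ s) w‖) hK1 hM
        ((pm_xb_contOn hΦ w).norm) (pm_g_pos hA hΦ hwz)
        (fun u v hu huv => (pm_hxb hΦ w).decay hA hu huv)
        (pm_keyV hM hAc hA hΦ hW husol hw hwz)
        τ hτ t ⟨ht, htτ⟩
      have hexp : Real.exp (-(1/K) * (τ - t)) = Real.exp (lam * (t - τ)) := by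
        rw [hlamdef]; congr 1; ring
      calc ‖mulE (Φ t) w‖
          ≤ (K + 1) * Real.exp (M + 1/K) * Real.exp (-(1/K) * (τ - t)) * ‖mulE (Φ τ) w‖ := this
        _ = C * Real.exp (lam * (t - τ)) * ‖mulE (Φ τ) w‖ := by
            rw [hCdef, hexp]
end

section
/- Let 𝕋 be a time scale that is NOT syndetic (sup{μ(t) : t ∈ 𝕋} = ∞), and let 𝐀 : 𝕋 → M_n(ℝ) be bounded, rd-continuous and uniformly regressive with fundamental Δ-matrix Ψ. Suppose there exist constants C, λ > 0 and subspaces U⁺(t), U⁻(t) ⊆ ℝⁿ (t ∈ 𝕋) with U⁺(t) ⊕ U⁻(t) = ℝⁿ, Ψ(t,t₀)U^±(t₀) = U^±(t), |Ψ(t,t₀)x₀| ≤ C|x₀|e^{−λ(s(t)−s(t₀))} for t ≥ t₀, x₀ ∈ U⁺(t₀), and |Ψ(t,t₀)x₀| ≤ C|x₀|e^{λ(s(t)−s(t₀))} for t ≤ t₀, x₀ ∈ U⁻(t₀). Then U⁺(t) = {0}, i.e. U⁻(t) = ℝⁿ, for every t ∈ 𝕋 (the system is unstable hyperbolic). -/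
open Set Filter

section Helpers

open MeasureTheory

lemma mulE_mul {n : ℕ} (M N : Matrix (Fin n) (Fin n) ℝ) (x : EuclideanSpace ℝ (Fin n)) :
    mulE (M * N) x = mulE M (mulE N x) := by
  unfold mulE
  rw [Matrix.toEuclideanLin_eq_toLin,
    Matrix.toLin_mul (PiLp.basisFun 2 ℝ (Fin n)) (PiLp.basisFun 2 ℝ (Fin n))
      (PiLp.basisFun 2 ℝ (Fin n))]
  simp [Matrix.toEuclideanLin_eq_toLin]

lemma mulE_one {n : ℕ} (x : EuclideanSpace ℝ (Fin n)) :
    mulE (1 : Matrix (Fin n) (Fin n) ℝ) x = x := by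
  unfold mulE
  rw [Matrix.toEuclideanLin_eq_toLin, Matrix.toLin_one]
  rfl

lemma mulE_add {n : ℕ} (M N : Matrix (Fin n) (Fin n) ℝ) (x : EuclideanSpace ℝ (Fin n)) :
    mulE (M + N) x = mulE M x + mulE N x := by
  simp [mulE]

lemma mulE_smul {n : ℕ} (c : ℝ) (M : Matrix (Fin n) (Fin n) ℝ) (x : EuclideanSpace ℝ (Fin n)) :
    mulE (c • M) x = c • mulE M x := by
  simp [mulE]

lemma tsFloor_mono (T : Set ℝ) (h0 : (0:ℝ) ∈ T) (hsub : T ⊆ Ici 0) :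
    Monotone (tsFloor T) := by
  intro a b hab
  unfold tsFloor
  rcases le_or_gt 0 a with ha | ha
  · refine csSup_le_csSup ⟨b, fun τ hτ => hτ.2⟩ ⟨0, h0, ha⟩ (fun τ hτ => ⟨hτ.1, hτ.2.trans hab⟩)
  · have ea : {τ | τ ∈ T ∧ τ ≤ a} = ∅ := by
      apply Set.eq_empty_iff_forall_notMem.2
      rintro τ ⟨hτT, hτa⟩
      have : (0:ℝ) ≤ τ := hsub hτT
      linarith
    rw [ea, Real.sSup_empty]
    rcases le_or_gt 0 b with hb | hb
    · exact le_csSup ⟨b, fun τ hτ => hτ.2⟩ ⟨h0, hb⟩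
    · have eb : {τ | τ ∈ T ∧ τ ≤ b} = ∅ := by
        apply Set.eq_empty_iff_forall_notMem.2
        rintro τ ⟨hτT, hτb⟩
        have : (0:ℝ) ≤ τ := hsub hτT
        linarith
      rw [eb, Real.sSup_empty]

lemma tsSigma_mono (T : Set ℝ) (hub : ¬ BddAbove T) : Monotone (tsSigma T) := by
  intro a b hab
  unfold tsSigma
  obtain ⟨x, hxT, hx⟩ := not_bddAbove_iff.1 hub b
  exact csInf_le_csInf ⟨a, fun τ hτ => hτ.2.le⟩ ⟨x, hxT, hx⟩
    (fun τ hτ => ⟨hτ.1, lt_of_le_of_lt hab hτ.2⟩)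

lemma tsG_measurable (T : Set ℝ) (hT : IsTimeScale T) : Measurable (tsG T) := by
  obtain ⟨hcl, hsub, hub, h0⟩ := hT
  have hfloor : Monotone (tsFloor T) := tsFloor_mono T h0 hsub
  have hsf : Monotone (fun τ => tsSigma T (tsFloor T τ)) :=
    (tsSigma_mono T hub).comp hfloor
  have hmeas : Measurable (fun τ => tsMu T (tsFloor T τ)) := by
    have : (fun τ => tsMu T (tsFloor T τ)) =
        (fun τ => tsSigma T (tsFloor T τ) - tsFloor T τ) := rfl
    rw [this]
    exact hsf.measurable.sub hfloor.measurable
  unfold tsG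
  apply Measurable.ite
  · exact measurableSet_lt measurable_const hmeas
  · exact (Real.measurable_log.comp (measurable_const.add hmeas)).div hmeas
  · exact measurable_const

lemma tsG_mem_Icc (T : Set ℝ) (τ : ℝ) : tsG T τ ∈ Icc (0:ℝ) 1 := by
  unfold tsG
  split_ifs with h
  · constructor
    · exact div_nonneg (Real.log_nonneg (by linarith)) h.le
    · rw [div_le_one h]
      have := Real.log_le_sub_one_of_pos (x := 1 + tsMu T (tsFloor T τ)) (by linarith)
      linarith
  · exact ⟨zero_le_one, le_refl 1⟩

lemma tsG_intervalIntegrable (T : Set ℝ) (hT : IsTimeScale T) (a b : ℝ) :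
    IntervalIntegrable (tsG T) volume a b := by
  rw [intervalIntegrable_iff]
  apply Measure.integrableOn_of_bounded (M := 1)
  · exact measure_Ioc_lt_top.ne
  · exact (tsG_measurable T hT).aestronglyMeasurable
  · apply Filter.Eventually.of_forall
    intro x
    have h := tsG_mem_Icc T x
    rw [Real.norm_eq_abs, abs_le]
    exact ⟨by linarith [h.1], h.2⟩

end Helpers

/-- Remark 4.5. On a non-syndetic time scale, a hyperbolic system is
unstable hyperbolic: the stable spaces are trivial, `U⁺(t) = {0}` (equivalently
`U⁻(t) = ℝⁿ`) for every `t ∈ T`. -/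
theorem nonsyndetic_hyperbolic_is_unstable (n : ℕ) (T : Set ℝ) (hT : IsTimeScale T)
    (hnotsyn : ¬ ∃ M : ℝ, ∀ t ∈ T, tsMu T t ≤ M)
    (A Ψ : ℝ → Matrix (Fin n) (Fin n) ℝ)
    (hAb : ∃ M : ℝ, ∀ t ∈ T, ∀ x : EuclideanSpace ℝ (Fin n), ‖mulE (A t) x‖ ≤ M * ‖x‖)
    (hAc : RdContinuousOn T A)
    (hAr : UniformlyRegressive T A)
    (hΨ : IsDeltaFundamental T A Ψ)
    (C lam : ℝ) (hC : 0 < C) (hlam : 0 < lam)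
    (U V : ℝ → Submodule ℝ (EuclideanSpace ℝ (Fin n)))
    (hcompl : ∀ t ∈ T, IsCompl (U t) (V t))
    (hinv : ∀ t ∈ T, ∀ t₀ ∈ T,
      (U t₀).map (Matrix.toEuclideanLin (Ψ t * (Ψ t₀)⁻¹)) = U t ∧
      (V t₀).map (Matrix.toEuclideanLin (Ψ t * (Ψ t₀)⁻¹)) = V t)
    (hUdecay : ∀ t ∈ T, ∀ t₀ ∈ T, t₀ ≤ t → ∀ x₀ ∈ U t₀,
      ‖mulE (Ψ t * (Ψ t₀)⁻¹) x₀‖ ≤ C * ‖x₀‖ * Real.exp (-lam * (tsS T t - tsS T t₀)))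
    (hVdecay : ∀ t ∈ T, ∀ t₀ ∈ T, t ≤ t₀ → ∀ x₀ ∈ V t₀,
      ‖mulE (Ψ t * (Ψ t₀)⁻¹) x₀‖ ≤ C * ‖x₀‖ * Real.exp (lam * (tsS T t - tsS T t₀))) :
    ∀ t ∈ T, U t = ⊥ := by
  obtain ⟨hcl, hsub, hub, h0⟩ := hT
  obtain ⟨M, hM⟩ := hAr.2
  set M1 := max M 1 with hM1def
  have hM1 : (0:ℝ) < M1 := lt_of_lt_of_le one_pos (le_max_right _ _)
  have hMC : (0:ℝ) < M1 * C := mul_pos hM1 hC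
  push_neg at hnotsyn
  obtain ⟨t₀, ht₀T, hμbig⟩ := hnotsyn (Real.exp (Real.log (M1 * C) / lam))
  have hμpos : 0 < tsMu T t₀ := lt_trans (Real.exp_pos _) hμbig
  have hmu_eq : tsMu T t₀ = tsSigma T t₀ - t₀ := rfl
  have ht₀σ : t₀ < tsSigma T t₀ := by
    have := hμpos; rw [hmu_eq] at this; linarith
  have hσT : tsSigma T t₀ ∈ T := by
    have hne : {τ | τ ∈ T ∧ t₀ < τ}.Nonempty := by
      obtain ⟨x, hxT, hx⟩ := not_bddAbove_iff.1 hub t₀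
      exact ⟨x, hxT, hx⟩
    have hbdd : BddBelow {τ | τ ∈ T ∧ t₀ < τ} := ⟨t₀, fun τ hτ => hτ.2.le⟩
    have hmem := csInf_mem_closure hne hbdd
    have hsubc : closure {τ | τ ∈ T ∧ t₀ < τ} ⊆ T := by
      calc closure {τ | τ ∈ T ∧ t₀ < τ} ⊆ closure T := closure_mono (fun τ hτ => hτ.1)
        _ = T := hcl.closure_eq
    exact hsubc hmem
  -- the floor of any point in [t₀, σ(t₀)) is t₀
  have hfloor_eq : ∀ τ, t₀ ≤ τ → τ < tsSigma T t₀ → tsFloor T τ = t₀ := by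
    intro τ h1 h2
    unfold tsFloor
    apply le_antisymm
    · refine csSup_le ⟨t₀, ht₀T, h1⟩ fun x hx => ?_
      by_contra hlt
      push_neg at hlt
      have : tsSigma T t₀ ≤ x := csInf_le ⟨t₀, fun y hy => hy.2.le⟩ ⟨hx.1, hlt⟩
      linarith [hx.2]
    · exact le_csSup ⟨τ, fun x hx => hx.2⟩ ⟨ht₀T, h1⟩
  have hg_eq : ∀ τ, t₀ ≤ τ → τ < tsSigma T t₀ →
      tsG T τ = Real.log (1 + tsMu T t₀) / tsMu T t₀ := by
    intro τ h1 h2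
    unfold tsG
    rw [hfloor_eq τ h1 h2, if_pos hμpos]
  -- the time transformation gains exactly log(1+μ) over the jump
  have hsdiff : tsS T (tsSigma T t₀) - tsS T t₀ = Real.log (1 + tsMu T t₀) := by
    unfold tsS
    rw [intervalIntegral.integral_interval_sub_left
      (tsG_intervalIntegrable T ⟨hcl, hsub, hub, h0⟩ 0 (tsSigma T t₀))
      (tsG_intervalIntegrable T ⟨hcl, hsub, hub, h0⟩ 0 t₀)]
    have hcongr : (∫ τ in t₀..(tsSigma T t₀), tsG T τ) =
        ∫ _ in t₀..(tsSigma T t₀), (Real.log (1 + tsMu T t₀) / tsMu T t₀) := by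
      apply intervalIntegral.integral_congr_ae
      have hne : ∀ᵐ x : ℝ, x ≠ tsSigma T t₀ := by
        have hc : ({tsSigma T t₀} : Set ℝ)ᶜ ∈ (MeasureTheory.ae MeasureTheory.volume) :=
          MeasureTheory.compl_mem_ae_iff.2 Real.volume_singleton
        filter_upwards [hc] with x hx
        simpa using hx
      filter_upwards [hne] with x hx hmem
      rw [Set.uIoc_of_le ht₀σ.le] at hmem
      exact hg_eq x hmem.1.le (lt_of_le_of_ne hmem.2 hx)
    rw [hcongr, intervalIntegral.integral_const, smul_eq_mul, ← hmu_eq, mul_comm,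
      div_mul_cancel₀ _ hμpos.ne']
  -- the fundamental matrix satisfies Ψ(σ(t₀)) = (1 + μ A(t₀)) Ψ(t₀)
  have hPsi : Ψ (tsSigma T t₀) = (1 + tsMu T t₀ • A t₀) * Ψ t₀ := by
    apply Matrix.toEuclideanLin.injective
    apply LinearMap.ext
    intro x₀
    have hd := hΨ.2 t₀ ht₀T x₀
    have key : ∀ ε > (0:ℝ),
        ‖(mulE (Ψ (tsSigma T t₀)) x₀ - mulE (Ψ t₀) x₀) -
          (tsSigma T t₀ - t₀) • mulE (A t₀) (mulE (Ψ t₀) x₀)‖ ≤ ε * |tsSigma T t₀ - t₀| := by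
      intro ε hε
      obtain ⟨δ, hδ, h⟩ := hd ε hε
      simpa using h t₀ ht₀T (by simpa using hδ)
    have hzero : (mulE (Ψ (tsSigma T t₀)) x₀ - mulE (Ψ t₀) x₀) -
        (tsSigma T t₀ - t₀) • mulE (A t₀) (mulE (Ψ t₀) x₀) = 0 := by
      rw [← norm_le_zero_iff]
      apply le_of_forall_pos_le_add
      intro ε hε
      rw [zero_add]
      have h1 := key (ε / (|tsSigma T t₀ - t₀| + 1)) (by positivity)
      have h2 : ε / (|tsSigma T t₀ - t₀| + 1) * |tsSigma T t₀ - t₀| ≤ ε := by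
        rw [div_mul_eq_mul_div, div_le_iff₀ (by positivity)]
        nlinarith [abs_nonneg (tsSigma T t₀ - t₀), hε.le]
      linarith
    rw [sub_sub, sub_eq_zero] at hzero
    show mulE (Ψ (tsSigma T t₀)) x₀ = mulE ((1 + tsMu T t₀ • A t₀) * Ψ t₀) x₀
    rw [mulE_mul, mulE_add, mulE_one, mulE_smul, hmu_eq]
    exact hzero
  intro t ht
  by_cases hu : IsUnit (Ψ t₀)
  · -- Ψ(t₀) invertible: the jump estimate forces U(t₀) = ⊥
    have hUbot : U t₀ = ⊥ := by
      rw [Submodule.eq_bot_iff]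
      intro x hx
      have hdet : IsUnit (Ψ t₀).det := (Matrix.isUnit_iff_isUnit_det _).1 hu
      have hmatid : Ψ (tsSigma T t₀) * (Ψ t₀)⁻¹ = 1 + tsMu T t₀ • A t₀ := by
        rw [hPsi, Matrix.mul_assoc, Matrix.mul_nonsing_inv _ hdet, Matrix.mul_one]
      have hdecay := hUdecay (tsSigma T t₀) hσT t₀ ht₀T ht₀σ.le x hx
      rw [hmatid, hsdiff] at hdecay
      have hreg : IsUnit (1 + tsMu T t₀ • A t₀) := hAr.1 t₀ ht₀T
      have hregdet : IsUnit (1 + tsMu T t₀ • A t₀).det :=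
        (Matrix.isUnit_iff_isUnit_det _).1 hreg
      have hxle : ‖x‖ ≤ M1 * ‖mulE (1 + tsMu T t₀ • A t₀) x‖ := by
        have h1 := hM t₀ ht₀T (mulE (1 + tsMu T t₀ • A t₀) x)
        have h2 : mulE (1 + tsMu T t₀ • A t₀)⁻¹ (mulE (1 + tsMu T t₀ • A t₀) x) = x := by
          rw [← mulE_mul, Matrix.nonsing_inv_mul _ hregdet, mulE_one]
        rw [h2] at h1
        calc ‖x‖ ≤ M * ‖mulE (1 + tsMu T t₀ • A t₀) x‖ := h1
          _ ≤ M1 * ‖mulE (1 + tsMu T t₀ • A t₀) x‖ :=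
            mul_le_mul_of_nonneg_right (le_max_left _ _) (norm_nonneg _)
      have hcomb : ‖x‖ ≤ M1 * (C * ‖x‖ * Real.exp (-lam * Real.log (1 + tsMu T t₀))) :=
        le_trans hxle (mul_le_mul_of_nonneg_left hdecay hM1.le)
      have hlt : Real.exp (-lam * Real.log (1 + tsMu T t₀)) < (M1 * C)⁻¹ := by
        rw [← Real.exp_log (inv_pos.2 hMC), Real.exp_lt_exp, Real.log_inv]
        have h1 : Real.log (M1 * C) / lam < Real.log (1 + tsMu T t₀) := by
          rw [Real.lt_log_iff_exp_lt (by linarith)]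
          linarith
        have h2 : Real.log (M1 * C) / lam * lam = Real.log (M1 * C) :=
          div_mul_cancel₀ _ hlam.ne'
        nlinarith [mul_pos hlam (sub_pos.2 h1)]
      by_contra hxne
      have hxpos : 0 < ‖x‖ := norm_pos_iff.2 hxne
      have h3 : M1 * C * Real.exp (-lam * Real.log (1 + tsMu T t₀)) < 1 := by
        have := mul_lt_mul_of_pos_left hlt hMC
        rwa [mul_inv_cancel₀ hMC.ne'] at this
      nlinarith [hcomb, hxpos, h3]
    have h := (hinv t ht t₀ ht₀T).1
    rw [hUbot, Submodule.map_bot] at h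
    exact h.symm
  · -- Ψ(t₀) not invertible: (Ψ t₀)⁻¹ = 0, so U(σ(t₀)) = ⊥ directly
    have hdet : ¬ IsUnit (Ψ t₀).det := fun h => hu ((Matrix.isUnit_iff_isUnit_det _).2 h)
    have hinv0 : (Ψ t₀)⁻¹ = 0 := Matrix.nonsing_inv_apply_not_isUnit _ hdet
    have hUσ : U (tsSigma T t₀) = ⊥ := by
      have h1 := (hinv (tsSigma T t₀) hσT t₀ ht₀T).1
      rw [hinv0, Matrix.mul_zero] at h1
      rw [← h1]
      simp
    have h2 := (hinv t ht (tsSigma T t₀) hσT).1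
    rw [hUσ, Submodule.map_bot] at h2
    exact h2.symm
end

section
/- (Theorem 6.1) Let 𝕋 be a time scale, 𝐀 : 𝕋 → M_n(ℝ) rd-continuous, and suppose there is a linear operator 𝐋 on the space of bounded functions 𝕋 → ℝⁿ with operator norm at most K (i.e. sup_t|𝐋f(t)| ≤ K sup_t|f(t)|) such that for every bounded rd-continuous f : 𝕋 → ℝⁿ the function 𝐋f is a bounded Δ-solution of x^Δ(t) = 𝐀(t)x(t) + f(t). Let r₀ > 0 and let 𝐠 : 𝕋 × B̄(0,r₀) → ℝⁿ be continuous with |𝐠(t,0)| ≤ ε for all t ∈ 𝕋 and |𝐠(t,x₁) − 𝐠(t,x₂)| ≤ l|x₁ − x₂| for all t ∈ 𝕋, x₁, x₂ ∈ B̄(0,r₀). If Kl ≤ 1/2 and Kε/(1 − Kl) ≤ r₀/2, then there exists a bounded function 𝐗 : 𝕋 → ℝⁿ with 𝐗 = 𝐋[𝐠(·, 𝐗(·))] — hence a bounded solution of x^Δ = 𝐀(t)x + 𝐠(t,x) — satisfying |𝐗(t)| ≤ Kε/(1 − Kl) for all t ∈ 𝕋. -/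
open Set Filter

open Topology

section AuxLemmas

/-- On a time scale, `σ(t) ∈ T`. -/
lemma tsSigma_mem {T : Set ℝ} (hT : IsTimeScale T) (t : ℝ) : tsSigma T t ∈ T := by
  obtain ⟨hcl, -, hub, -⟩ := hT
  have hne : {τ ∈ T | t < τ}.Nonempty := by
    obtain ⟨y, hy, hty⟩ := (not_bddAbove_iff.mp hub) t
    exact ⟨y, hy, hty⟩
  have hbdd : BddBelow {τ ∈ T | t < τ} := ⟨t, fun τ hτ => hτ.2.le⟩
  have h1 : tsSigma T t ∈ closure {τ ∈ T | t < τ} := csInf_mem_closure hne hbdd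
  have h2 : closure {τ ∈ T | t < τ} ⊆ closure T :=
    closure_mono (fun τ hτ => hτ.1)
  rw [hcl.closure_eq] at h2
  exact h2 h1

/-- Δ-differentiability implies continuity within `T`. -/
lemma HasDeltaDerivAt.continuousWithinAt_of_mem
    {E : Type*} [NormedAddCommGroup E] [NormedSpace ℝ E]
    {T : Set ℝ} {f : ℝ → E} {γ : E} {t : ℝ} (ht : t ∈ T)
    (h : HasDeltaDerivAt T f γ t) : ContinuousWithinAt f T t := by
  set s := tsSigma T t with hs
  -- First, `f t = f s - (s - t) • γ`.
  have key : f s - f t - (s - t) • γ = 0 := by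
    set v : E := f s - f t - (s - t) • γ with hv
    set c : ℝ := |s - t| with hc
    have hc0 : 0 ≤ c := abs_nonneg _
    have hle0 : ‖v‖ ≤ 0 := by
      by_contra hpos'
      push_neg at hpos'
      obtain ⟨δ, hδ, hd⟩ := h (‖v‖ / (2 * (c + 1))) (by positivity)
      have hvt := hd t ht (by simpa using hδ)
      have hvt' : ‖v‖ ≤ ‖v‖ / (2 * (c + 1)) * c := by
        simpa [hv, hc, hs] using hvt
      have hub2 : ‖v‖ / (2 * (c + 1)) * c ≤ ‖v‖ / 2 := by
        rw [div_mul_eq_mul_div, div_le_div_iff₀ (by linarith) (by norm_num)]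
        nlinarith
      linarith
    have : v = 0 := norm_le_zero_iff.mp hle0
    simpa [hv] using this
  rw [sub_sub] at key
  have h1 : f s = f t + (s - t) • γ := sub_eq_zero.mp key
  have hft : f t = f s - (s - t) • γ := by rw [h1]; abel
  rw [Metric.continuousWithinAt_iff]
  intro ε hε
  obtain ⟨δ, hδ, hd⟩ := h (ε / (2 * (|s - t| + 1))) (by positivity)
  refine ⟨min δ (min 1 (ε / (2 * (‖γ‖ + 1)))), by positivity, fun u hu hdu => ?_⟩
  rw [Real.dist_eq] at hdu
  have hb1 : |u - t| < δ := lt_of_lt_of_le hdu (min_le_left _ _)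
  have hb2 : |u - t| < 1 :=
    lt_of_lt_of_le hdu (le_trans (min_le_right _ _) (min_le_left _ _))
  have hb3 : |u - t| < ε / (2 * (‖γ‖ + 1)) :=
    lt_of_lt_of_le hdu (le_trans (min_le_right _ _) (min_le_right _ _))
  have hD := hd u hu hb1
  rw [dist_eq_norm]
  have heq : f u - f t = -((f s - f u) - (s - u) • γ) + (u - t) • γ := by
    rw [hft]
    have hsm : (s - u) • γ + (u - t) • γ = (s - t) • γ := by
      rw [← add_smul]; ring_nf
    rw [← hsm]; abel
  have hsu : |s - u| ≤ |s - t| + |u - t| := by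
    calc |s - u| ≤ |s - t| + |t - u| := abs_sub_le s t u
    _ = |s - t| + |u - t| := by rw [abs_sub_comm t u]
  have hcalc : ‖f u - f t‖ ≤ ε / (2 * (|s - t| + 1)) * |s - u| + |u - t| * ‖γ‖ := by
    rw [heq]
    calc ‖-((f s - f u) - (s - u) • γ) + (u - t) • γ‖
        ≤ ‖-((f s - f u) - (s - u) • γ)‖ + ‖(u - t) • γ‖ := norm_add_le _ _
    _ = ‖(f s - f u) - (s - u) • γ‖ + |u - t| * ‖γ‖ := by
        rw [norm_neg, norm_smul, Real.norm_eq_abs]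
    _ ≤ ε / (2 * (|s - t| + 1)) * |s - u| + |u - t| * ‖γ‖ := by
        exact add_le_add hD le_rfl
  have e1 : ε / (2 * (|s - t| + 1)) * |s - u| ≤ ε / 2 := by
    rw [div_mul_eq_mul_div, div_le_div_iff₀ (by positivity) (by norm_num)]
    have habs : (0:ℝ) ≤ |s - t| := abs_nonneg _
    nlinarith [abs_nonneg (u - t)]
  have e2 : |u - t| * ‖γ‖ < ε / 2 := by
    have h3' : |u - t| * (2 * (‖γ‖ + 1)) < ε := (lt_div_iff₀ (by positivity)).mp hb3
    nlinarith [abs_nonneg (u - t), norm_nonneg γ]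
  linarith

/-- Continuity on `T` implies rd-continuity. -/
lemma ContinuousOn.rdContinuousOn {E : Type*} [TopologicalSpace E] {T : Set ℝ} {f : ℝ → E}
    (h : ContinuousOn f T) : RdContinuousOn T f :=
  ⟨fun t ht _ => h t ht, fun t ht _ => (h t ht).mono Set.inter_subset_left⟩

end AuxLemmas

/-- Theorem 6.1. Suppose `L` is a linear operator with norm at most `K`
on bounded functions `T → ℝⁿ` producing bounded Δ-solutions of `x^Δ = A(t)x + f(t)`, and
`g` is continuous, `ε`-small at `0` and `l`-Lipschitz on the ball `B̄(0,r₀)`. If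
`Kl ≤ 1/2` and `Kε/(1−Kl) ≤ r₀/2`, then there is a bounded `X` with
`X = L[g(·, X(·))]` — hence a bounded solution of `x^Δ = A(t)x + g(t,x)` — with
`|X(t)| ≤ Kε/(1−Kl)` on `T`. -/
theorem timescale_bounded_solution_almost_linear (n : ℕ) (T : Set ℝ) (hT : IsTimeScale T)
    (A : ℝ → Matrix (Fin n) (Fin n) ℝ)
    (hAc : RdContinuousOn T A)
    (L : (ℝ → EuclideanSpace ℝ (Fin n)) →ₗ[ℝ] (ℝ → EuclideanSpace ℝ (Fin n)))
    (K : ℝ) (hK : 0 ≤ K)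
    (hLnorm : ∀ f : ℝ → EuclideanSpace ℝ (Fin n), ∀ M : ℝ,
      (∀ t ∈ T, ‖f t‖ ≤ M) → ∀ t ∈ T, ‖L f t‖ ≤ K * M)
    (hLsol : ∀ f : ℝ → EuclideanSpace ℝ (Fin n), RdContinuousOn T f →
      (∃ M : ℝ, ∀ t ∈ T, ‖f t‖ ≤ M) →
      ∀ t ∈ T, HasDeltaDerivAt T (L f) (mulE (A t) (L f t) + f t) t)
    (r₀ ε l : ℝ) (hr₀ : 0 < r₀) (hε : 0 ≤ ε) (hl : 0 ≤ l)
    (g : ℝ → EuclideanSpace ℝ (Fin n) → EuclideanSpace ℝ (Fin n))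
    (hgc : ContinuousOn (fun p : ℝ × EuclideanSpace ℝ (Fin n) => g p.1 p.2)
      (T ×ˢ Metric.closedBall 0 r₀))
    (hg0 : ∀ t ∈ T, ‖g t 0‖ ≤ ε)
    (hglip : ∀ t ∈ T, ∀ x₁ ∈ Metric.closedBall (0 : EuclideanSpace ℝ (Fin n)) r₀,
      ∀ x₂ ∈ Metric.closedBall (0 : EuclideanSpace ℝ (Fin n)) r₀,
      ‖g t x₁ - g t x₂‖ ≤ l * ‖x₁ - x₂‖)
    (hKl : K * l ≤ 1 / 2)
    (hKε : K * ε / (1 - K * l) ≤ r₀ / 2) :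
    ∃ X : ℝ → EuclideanSpace ℝ (Fin n),
      (∀ t ∈ T, X t = L (fun τ => g τ (X τ)) t) ∧
      (∀ t ∈ T, HasDeltaDerivAt T X (mulE (A t) (X t) + g t (X t)) t) ∧
      (∀ t ∈ T, ‖X t‖ ≤ K * ε / (1 - K * l)) := by
  classical
  have h2 : (1:ℝ)/2 ≤ 1 - K * l := by linarith
  set R : ℝ := K * ε / (1 - K * l) with hR
  have hRnonneg : 0 ≤ R := div_nonneg (by positivity) (by linarith)
  have hRr₀ : R ≤ r₀ := le_trans hKε (by linarith)
  have hone : (1 - K * l) ≠ 0 := by linarith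
  have hRfix : K * (l * R + ε) = R := by
    have hc : R * (1 - K * l) = K * ε := by rw [hR, div_mul_cancel₀ _ hone]
    linear_combination -hc
  -- the iteration
  set F : (ℝ → EuclideanSpace ℝ (Fin n)) → (ℝ → EuclideanSpace ℝ (Fin n)) :=
    fun Y => L (fun τ => g τ (Y τ)) with hF
  set Xs : ℕ → ℝ → EuclideanSpace ℝ (Fin n) := fun k => F^[k] (fun _ => 0) with hXs
  have hXsucc : ∀ k, Xs (k+1) = F (Xs k) := fun k => Function.iterate_succ_apply' F k _
  -- bound on g on the ball of radius R
  have hball : ∀ x : EuclideanSpace ℝ (Fin n), ‖x‖ ≤ R → x ∈ Metric.closedBall (0 : EuclideanSpace ℝ (Fin n)) r₀ :=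
    fun x hx => mem_closedBall_zero_iff.mpr (le_trans hx hRr₀)
  have hzb : (0 : EuclideanSpace ℝ (Fin n)) ∈ Metric.closedBall (0 : EuclideanSpace ℝ (Fin n)) r₀ :=
    mem_closedBall_zero_iff.mpr (by simpa using hr₀.le)
  have hgbound : ∀ t ∈ T, ∀ x : EuclideanSpace ℝ (Fin n), ‖x‖ ≤ R → ‖g t x‖ ≤ l * R + ε := by
    intro t ht x hx
    have h1 : ‖g t x - g t 0‖ ≤ l * ‖x - 0‖ := hglip t ht x (hball x hx) 0 hzb
    calc ‖g t x‖ = ‖(g t x - g t 0) + g t 0‖ := by congr 1; abel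
    _ ≤ ‖g t x - g t 0‖ + ‖g t 0‖ := norm_add_le _ _
    _ ≤ l * ‖x - 0‖ + ε := add_le_add h1 (hg0 t ht)
    _ ≤ l * R + ε := by
        simp only [sub_zero]
        have := mul_le_mul_of_nonneg_left hx hl
        linarith
  -- uniform bound on the iterates
  have hbound : ∀ k, ∀ t ∈ T, ‖Xs k t‖ ≤ R := by
    intro k
    induction k with
    | zero => intro t ht; simp [hXs, hRnonneg]
    | succ k ih =>
      intro t ht
      rw [hXsucc k]
      have := hLnorm (fun τ => g τ (Xs k τ)) (l * R + ε)
        (fun τ hτ => hgbound τ hτ (Xs k τ) (ih τ hτ)) t ht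
      simpa [hF, hRfix] using this
  -- difference of images under L
  have hLdiff : ∀ (a b : ℝ → EuclideanSpace ℝ (Fin n)) (t : ℝ),
      L a t - L b t = L (a - b) t := by
    intro a b t; rw [map_sub]; rfl
  -- successive differences contract
  have hdiff : ∀ k, ∀ t ∈ T, ‖Xs (k+1) t - Xs k t‖ ≤ (1/2)^k * R := by
    intro k
    induction k with
    | zero =>
      intro t ht
      have : Xs 0 t = 0 := rfl
      rw [this, sub_zero]
      simpa using hbound 1 t ht
    | succ k ih =>
      intro t ht
      have hstep : Xs (k+2) t - Xs (k+1) t =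
          L ((fun τ => g τ (Xs (k+1) τ)) - (fun τ => g τ (Xs k τ))) t := by
        rw [hXsucc (k+1), hXsucc k, ← hLdiff]
      rw [hstep]
      have hM : ∀ τ ∈ T,
          ‖((fun τ => g τ (Xs (k+1) τ)) - (fun τ => g τ (Xs k τ))) τ‖ ≤ l * ((1/2)^k * R) := by
        intro τ hτ
        have h1 : ‖g τ (Xs (k+1) τ) - g τ (Xs k τ)‖ ≤ l * ‖Xs (k+1) τ - Xs k τ‖ :=
          hglip τ hτ _ (hball _ (hbound (k+1) τ hτ)) _ (hball _ (hbound k τ hτ))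
        have h2 := mul_le_mul_of_nonneg_left (ih τ hτ) hl
        calc ‖((fun τ => g τ (Xs (k+1) τ)) - (fun τ => g τ (Xs k τ))) τ‖
            = ‖g τ (Xs (k+1) τ) - g τ (Xs k τ)‖ := rfl
        _ ≤ l * ‖Xs (k+1) τ - Xs k τ‖ := h1
        _ ≤ l * ((1/2)^k * R) := h2
      have := hLnorm _ _ hM t ht
      have hpk : (0:ℝ) ≤ (1/2)^k * R := by positivity
      calc ‖L ((fun τ => g τ (Xs (k+1) τ)) - (fun τ => g τ (Xs k τ))) t‖
          ≤ K * (l * ((1/2)^k * R)) := this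
      _ = (K * l) * ((1/2)^k * R) := by ring
      _ ≤ (1/2) * ((1/2)^k * R) := mul_le_mul_of_nonneg_right hKl hpk
      _ = (1/2)^(k+1) * R := by ring
  -- tail estimate
  have htail : ∀ k j, ∀ t ∈ T, ‖Xs (k+j) t - Xs k t‖ ≤ 2 * ((1/2)^k * R) := by
    intro k j
    have main : ∀ t ∈ T, ‖Xs (k+j) t - Xs k t‖ ≤ (2 - 2*(1/2)^j) * ((1/2)^k * R) := by
      induction j with
      | zero => intro t ht; simp
      | succ j ih =>
        intro t ht
        have h1 := hdiff (k+j) t ht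
        have h2 := ih t ht
        have e1 : (1/2:ℝ)^(k+j) = (1/2)^k * (1/2)^j := pow_add _ _ _
        calc ‖Xs (k+(j+1)) t - Xs k t‖
            = ‖(Xs (k+j+1) t - Xs (k+j) t) + (Xs (k+j) t - Xs k t)‖ := by
              rw [show k+(j+1) = k+j+1 from rfl]; abel_nf
        _ ≤ ‖Xs (k+j+1) t - Xs (k+j) t‖ + ‖Xs (k+j) t - Xs k t‖ := norm_add_le _ _
        _ ≤ (1/2)^(k+j) * R + (2 - 2*(1/2)^j) * ((1/2)^k * R) := add_le_add h1 h2
        _ = (2 - 2*(1/2)^(j+1)) * ((1/2)^k * R) := by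
              rw [e1, pow_succ]; ring
    intro t ht
    have hpk : (0:ℝ) ≤ (1/2)^k * R := by positivity
    have hpj : (0:ℝ) ≤ (1/2)^j := by positivity
    calc ‖Xs (k+j) t - Xs k t‖ ≤ (2 - 2*(1/2)^j) * ((1/2)^k * R) := main t ht
    _ ≤ 2 * ((1/2)^k * R) := by nlinarith
  -- convergence on T
  have hcauchy : ∀ t ∈ T, CauchySeq (fun k => Xs k t) := by
    intro t ht
    apply cauchySeq_of_le_geometric (1/2) R (by norm_num)
    intro k
    rw [dist_eq_norm, norm_sub_rev]
    calc ‖Xs (k+1) t - Xs k t‖ ≤ (1/2)^k * R := hdiff k t ht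
    _ = R * (1/2)^k := by ring
  set X : ℝ → EuclideanSpace ℝ (Fin n) :=
    fun t => limUnder atTop (fun k => Xs k t) with hX
  have hconv : ∀ t ∈ T, Tendsto (fun k => Xs k t) atTop (𝓝 (X t)) :=
    fun t ht => (hcauchy t ht).tendsto_limUnder
  -- X is bounded by R on T
  have hXbound : ∀ t ∈ T, ‖X t‖ ≤ R := by
    intro t ht
    exact le_of_tendsto (hconv t ht).norm (Eventually.of_forall (fun k => hbound k t ht))
  -- uniform tail bound
  have hXtail : ∀ k, ∀ t ∈ T, ‖X t - Xs k t‖ ≤ 2 * ((1/2)^k * R) := by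
    intro k t ht
    have h1 : Tendsto (fun m => ‖Xs m t - Xs k t‖) atTop (𝓝 ‖X t - Xs k t‖) :=
      ((hconv t ht).sub_const (Xs k t)).norm
    apply le_of_tendsto h1
    filter_upwards [eventually_ge_atTop k] with m hm
    obtain ⟨j, rfl⟩ := Nat.exists_eq_add_of_le hm
    exact htail k j t ht
  -- fixed point property
  have hfix : ∀ t ∈ T, X t = L (fun τ => g τ (X τ)) t := by
    intro t ht
    have key : ∀ k, ‖X t - L (fun τ => g τ (X τ)) t‖ ≤ (1/2)^k * (R + 2 * (K * l) * R) := by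
      intro k
      have hs1 : ‖X t - Xs (k+1) t‖ ≤ 2 * ((1/2)^(k+1) * R) := hXtail (k+1) t ht
      have hs2 : ‖Xs (k+1) t - L (fun τ => g τ (X τ)) t‖ ≤ K * (l * (2 * ((1/2)^k * R))) := by
        have hd : Xs (k+1) t - L (fun τ => g τ (X τ)) t =
            L ((fun τ => g τ (Xs k τ)) - (fun τ => g τ (X τ))) t := by
          rw [hXsucc k, ← hLdiff]
        rw [hd]
        apply hLnorm _ _ ?_ t ht
        intro τ hτ
        have h1 : ‖g τ (Xs k τ) - g τ (X τ)‖ ≤ l * ‖Xs k τ - X τ‖ :=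
          hglip τ hτ _ (hball _ (hbound k τ hτ)) _ (hball _ (hXbound τ hτ))
        have h2 : ‖Xs k τ - X τ‖ ≤ 2 * ((1/2)^k * R) := by
          rw [norm_sub_rev]; exact hXtail k τ hτ
        calc ‖((fun τ => g τ (Xs k τ)) - (fun τ => g τ (X τ))) τ‖
            = ‖g τ (Xs k τ) - g τ (X τ)‖ := rfl
        _ ≤ l * ‖Xs k τ - X τ‖ := h1
        _ ≤ l * (2 * ((1/2)^k * R)) := mul_le_mul_of_nonneg_left h2 hl
      have hKl2 : K * (l * (2 * ((1/2)^k * R))) = (1/2)^k * (2 * (K * l) * R) := by ring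
      calc ‖X t - L (fun τ => g τ (X τ)) t‖
          = ‖(X t - Xs (k+1) t) + (Xs (k+1) t - L (fun τ => g τ (X τ)) t)‖ := by congr 1; abel
      _ ≤ ‖X t - Xs (k+1) t‖ + ‖Xs (k+1) t - L (fun τ => g τ (X τ)) t‖ := norm_add_le _ _
      _ ≤ 2 * ((1/2)^(k+1) * R) + K * (l * (2 * ((1/2)^k * R))) := add_le_add hs1 hs2
      _ = (1/2)^k * (R + 2 * (K * l) * R) := by rw [pow_succ]; ring
    have htend : Tendsto (fun k => (1/2:ℝ)^k * (R + 2 * (K * l) * R)) atTop (𝓝 0) := by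
      have := tendsto_pow_atTop_nhds_zero_of_lt_one (by norm_num : (0:ℝ) ≤ 1/2) (by norm_num)
      simpa using this.mul_const (R + 2 * (K * l) * R)
    have hle0 : ‖X t - L (fun τ => g τ (X τ)) t‖ ≤ 0 :=
      ge_of_tendsto htend (Eventually.of_forall key)
    have := norm_le_zero_iff.mp hle0
    exact sub_eq_zero.mp this
  -- continuity of the iterates on T
  have hcontk : ∀ k, ContinuousOn (Xs k) T := by
    intro k
    induction k with
    | zero => exact continuousOn_const
    | succ k ih =>
      have hfc : ContinuousOn (fun τ => g τ (Xs k τ)) T := by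
        apply hgc.comp (continuousOn_id.prodMk ih)
        intro τ hτ
        exact ⟨hτ, hball _ (hbound k τ hτ)⟩
      intro t ht
      have hsol := hLsol (fun τ => g τ (Xs k τ)) hfc.rdContinuousOn
        ⟨l * R + ε, fun τ hτ => hgbound τ hτ _ (hbound k τ hτ)⟩ t ht
      have := hsol.continuousWithinAt_of_mem ht
      rw [hXsucc k]
      exact this
  -- uniform convergence on T and continuity of X on T
  have hunif : TendstoUniformlyOn (fun k => Xs k) X atTop T := by
    rw [Metric.tendstoUniformlyOn_iff]
    intro ε' hε'
    have htend : Tendsto (fun k => 2 * ((1/2:ℝ)^k * R)) atTop (𝓝 0) := by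
      have := tendsto_pow_atTop_nhds_zero_of_lt_one (by norm_num : (0:ℝ) ≤ 1/2) (by norm_num)
      have h := (this.mul_const R).const_mul 2
      simpa using h
    filter_upwards [htend.eventually (gt_mem_nhds hε')] with k hk t ht
    rw [dist_eq_norm]
    exact lt_of_le_of_lt (hXtail k t ht) hk
  have hXcont : ContinuousOn X T :=
    hunif.continuousOn (Eventually.of_forall hcontk).frequently
  -- rd-continuity and boundedness of g ∘ X
  have hfXc : ContinuousOn (fun τ => g τ (X τ)) T := by
    apply hgc.comp (continuousOn_id.prodMk hXcont)
    intro τ hτ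
    exact ⟨hτ, hball _ (hXbound τ hτ)⟩
  -- the Δ-derivative property
  refine ⟨X, hfix, ?_, hXbound⟩
  intro t ht
  have hsol := hLsol (fun τ => g τ (X τ)) hfXc.rdContinuousOn
    ⟨l * R + ε, fun τ hτ => hgbound τ hτ _ (hXbound τ hτ)⟩ t ht
  intro ε' hε'
  obtain ⟨δ, hδp, hd⟩ := hsol ε' hε'
  refine ⟨δ, hδp, fun u hu hdu => ?_⟩
  have hσ : tsSigma T t ∈ T := tsSigma_mem hT t
  rw [hfix u hu, hfix _ hσ]
  have hgoal := hd u hu hdu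
  have hder : mulE (A t) (L (fun τ => g τ (X τ)) t) + (fun τ => g τ (X τ)) t
      = mulE (A t) (X t) + g t (X t) := by
    rw [← hfix t ht]
  rw [hder] at hgoal
  exact hgoal
end

section
/- (Lemma 6.4) Let 𝕋 be a time scale with time transformation s, Ψ : 𝕋 → M_n(ℝ) a matrix function with Ψ(0) = Eₙ, U⁺ ⊆ ℝⁿ a subspace, and a ≥ 1, λ > 0 with |Ψ(t)y₀| ≤ a|y₀|e^{−λ s(t)} for all t ∈ 𝕋, y₀ ∈ U⁺. Let 𝐋 be a linear operator on bounded functions 𝕋 → ℝⁿ and K > 0 such that |f(t)| ≤ C e^{−λ s(t)} for all t implies |𝐋f(t)| ≤ K C e^{−λ s(t)} for all t. Let r₀ > 0 and 𝐠 : 𝕋 × B̄(0,r₀) → ℝⁿ satisfy 𝐠(t,0) = 0 and |𝐠(t,x₁) − 𝐠(t,x₂)| ≤ l|x₁ − x₂| on B̄(0,r₀), with Kl < 1/2. Fix y₀ ∈ U⁺ with 2a|y₀| ≤ r₀, and define x⁰(t) := 0, x¹(t) := Ψ(t)y₀, and x^{m+1}(t) := Ψ(t)y₀ + 𝐋[𝐠(·,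 x^m(·))](t) for m ≥ 1. Then all approximations are well defined and satisfy, for all t ∈ 𝕋 and m ≥ 1: |x^m(t)| ≤ 2a|y₀|e^{−λ s(t)} ≤ r₀, and |x^{m+1}(t) − x^m(t)| ≤ a(Kl)^m|y₀|e^{−λ s(t)}. -/
open Set Filter

/-- Lemma 6.4. In the Lyapunov–Perron iteration scheme
`x⁰ = 0`, `x¹(t) = Ψ(t)y₀`, `x^{m+1}(t) = Ψ(t)y₀ + L[g(·, x^m(·))](t)`, all approximations
are well defined and satisfy `|x^m(t)| ≤ 2a|y₀|e^{−λ s(t)} ≤ r₀` together with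
`|x^{m+1}(t) − x^m(t)| ≤ a(Kl)^m |y₀| e^{−λ s(t)}` for all `t ∈ T` and `m ≥ 1`. -/
theorem lyapunov_perron_iterates_bounds (n : ℕ) (T : Set ℝ) (hT : IsTimeScale T)
    (Ψ : ℝ → Matrix (Fin n) (Fin n) ℝ) (hΨ0 : Ψ 0 = 1)
    (Up : Submodule ℝ (EuclideanSpace ℝ (Fin n)))
    (a lam : ℝ) (ha : 1 ≤ a) (hlam : 0 < lam)
    (hdecay : ∀ t ∈ T, ∀ y ∈ Up, ‖mulE (Ψ t) y‖ ≤ a * ‖y‖ * Real.exp (-lam * tsS T t))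
    (L : (ℝ → EuclideanSpace ℝ (Fin n)) →ₗ[ℝ] (ℝ → EuclideanSpace ℝ (Fin n)))
    (K : ℝ) (hK : 0 < K)
    (hLw : ∀ f : ℝ → EuclideanSpace ℝ (Fin n), ∀ C : ℝ,
      (∀ t ∈ T, ‖f t‖ ≤ C * Real.exp (-lam * tsS T t)) →
      ∀ t ∈ T, ‖L f t‖ ≤ K * C * Real.exp (-lam * tsS T t))
    (r₀ l : ℝ) (hr₀ : 0 < r₀) (hl : 0 ≤ l)
    (g : ℝ → EuclideanSpace ℝ (Fin n) → EuclideanSpace ℝ (Fin n))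
    (hg0 : ∀ t ∈ T, g t 0 = 0)
    (hglip : ∀ t ∈ T, ∀ x₁ ∈ Metric.closedBall (0 : EuclideanSpace ℝ (Fin n)) r₀,
      ∀ x₂ ∈ Metric.closedBall (0 : EuclideanSpace ℝ (Fin n)) r₀,
      ‖g t x₁ - g t x₂‖ ≤ l * ‖x₁ - x₂‖)
    (hKl : K * l < 1 / 2)
    (y₀ : EuclideanSpace ℝ (Fin n)) (hy₀ : y₀ ∈ Up) (hy₀r : 2 * a * ‖y₀‖ ≤ r₀)
    (x : ℕ → ℝ → EuclideanSpace ℝ (Fin n))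
    (hx0 : ∀ t, x 0 t = 0)
    (hx1 : ∀ t, x 1 t = mulE (Ψ t) y₀)
    (hxrec : ∀ m : ℕ, 1 ≤ m → ∀ t,
      x (m + 1) t = mulE (Ψ t) y₀ + L (fun τ => g τ (x m τ)) t) :
    ∀ m : ℕ, 1 ≤ m → ∀ t ∈ T,
      (‖x m t‖ ≤ 2 * a * ‖y₀‖ * Real.exp (-lam * tsS T t) ∧
        2 * a * ‖y₀‖ * Real.exp (-lam * tsS T t) ≤ r₀) ∧
      ‖x (m + 1) t - x m t‖ ≤ a * (K * l) ^ m * ‖y₀‖ * Real.exp (-lam * tsS T t) := by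
  obtain ⟨hcl, hsub, hub, h0T⟩ := hT
  have ha0 : (0:ℝ) ≤ a := zero_le_one.trans ha
  have hy0nn : (0:ℝ) ≤ ‖y₀‖ := norm_nonneg _
  have hgnn : ∀ τ, 0 ≤ tsG T τ := by
    intro τ
    unfold tsG
    split
    · next h =>
      refine div_nonneg (Real.log_nonneg ?_) h.le
      linarith
    · exact zero_le_one
  have hsnn : ∀ t ∈ T, 0 ≤ tsS T t := by
    intro t ht
    exact intervalIntegral.integral_nonneg (hsub ht) (fun u _ => hgnn u)
  have hE1 : ∀ t ∈ T, Real.exp (-lam * tsS T t) ≤ 1 := by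
    intro t ht
    rw [show (1:ℝ) = Real.exp 0 by simp]
    apply Real.exp_le_exp.2
    have := hsnn t ht
    nlinarith
  have hEpos : ∀ t, 0 < Real.exp (-lam * tsS T t) := fun t => Real.exp_pos _
  have hball : ∀ t ∈ T, ∀ v : EuclideanSpace ℝ (Fin n),
      ‖v‖ ≤ 2 * a * ‖y₀‖ * Real.exp (-lam * tsS T t) →
      v ∈ Metric.closedBall (0 : EuclideanSpace ℝ (Fin n)) r₀ := by
    intro t ht v hv
    rw [Metric.mem_closedBall, dist_zero_right]
    have h1 := hE1 t ht
    nlinarith [hEpos t]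
  have h0ball : (0 : EuclideanSpace ℝ (Fin n)) ∈
      Metric.closedBall (0 : EuclideanSpace ℝ (Fin n)) r₀ := by
    simp [hr₀.le]
  have hgb : ∀ τ ∈ T, ∀ v : EuclideanSpace ℝ (Fin n),
      ‖v‖ ≤ 2 * a * ‖y₀‖ * Real.exp (-lam * tsS T τ) → ‖g τ v‖ ≤ l * ‖v‖ := by
    intro τ hτ v hv
    have := hglip τ hτ v (hball τ hτ v hv) 0 h0ball
    rwa [hg0 τ hτ, sub_zero, sub_zero] at this
  intro m hm
  induction m, hm using Nat.le_induction with
  | base =>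
    intro t ht
    have hd := hdecay t ht y₀ hy₀
    have hEt := hEpos t
    have hE1t := hE1 t ht
    refine ⟨⟨?_, ?_⟩, ?_⟩
    · rw [hx1]
      nlinarith [mul_nonneg (mul_nonneg ha0 hy0nn) hEt.le]
    · nlinarith [mul_nonneg (mul_nonneg ha0 hy0nn) hEt.le]
    · rw [hxrec 1 le_rfl t, hx1, add_sub_cancel_left]
      have hb : ∀ τ ∈ T, ‖g τ (x 1 τ)‖ ≤ (l * (a * ‖y₀‖)) * Real.exp (-lam * tsS T τ) := by
        intro τ hτ
        have hd' := hdecay τ hτ y₀ hy₀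
        rw [← hx1 τ] at hd'
        have hx2 : ‖x 1 τ‖ ≤ 2 * a * ‖y₀‖ * Real.exp (-lam * tsS T τ) := by
          nlinarith [mul_nonneg (mul_nonneg ha0 hy0nn) (hEpos τ).le]
        have h1 := hgb τ hτ _ hx2
        calc ‖g τ (x 1 τ)‖ ≤ l * ‖x 1 τ‖ := h1
          _ ≤ l * (a * ‖y₀‖ * Real.exp (-lam * tsS T τ)) :=
            mul_le_mul_of_nonneg_left hd' hl
          _ = (l * (a * ‖y₀‖)) * Real.exp (-lam * tsS T τ) := by ring
      have hL := hLw _ _ hb t ht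
      calc ‖L (fun τ => g τ (x 1 τ)) t‖
          ≤ K * (l * (a * ‖y₀‖)) * Real.exp (-lam * tsS T t) := hL
        _ = a * (K * l) ^ 1 * ‖y₀‖ * Real.exp (-lam * tsS T t) := by ring
  | succ m hm ih =>
    intro t ht
    have hxm1 : ∀ τ ∈ T, ‖x (m + 1) τ‖ ≤ 2 * a * ‖y₀‖ * Real.exp (-lam * tsS T τ) := by
      intro τ hτ
      rw [hxrec m hm τ]
      have hb : ∀ u ∈ T, ‖g u (x m u)‖ ≤ (l * (2 * a * ‖y₀‖)) * Real.exp (-lam * tsS T u) := by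
        intro u hu
        have h1 := (ih u hu).1.1
        calc ‖g u (x m u)‖ ≤ l * ‖x m u‖ := hgb u hu _ h1
          _ ≤ (l * (2 * a * ‖y₀‖)) * Real.exp (-lam * tsS T u) := by
            have := mul_le_mul_of_nonneg_left h1 hl
            linarith [this]
      have hL := hLw _ _ hb τ hτ
      have hd := hdecay τ hτ y₀ hy₀
      have hEt := hEpos τ
      calc ‖mulE (Ψ τ) y₀ + L (fun u => g u (x m u)) τ‖
          ≤ ‖mulE (Ψ τ) y₀‖ + ‖L (fun u => g u (x m u)) τ‖ := norm_add_le _ _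
        _ ≤ a * ‖y₀‖ * Real.exp (-lam * tsS T τ)
            + K * (l * (2 * a * ‖y₀‖)) * Real.exp (-lam * tsS T τ) := add_le_add hd hL
        _ ≤ 2 * a * ‖y₀‖ * Real.exp (-lam * tsS T τ) := by
            nlinarith [mul_nonneg (mul_nonneg ha0 hy0nn) hEt.le,
              mul_le_mul_of_nonneg_right hKl.le
                (mul_nonneg (mul_nonneg ha0 hy0nn) hEt.le)]
    refine ⟨⟨hxm1 t ht, ?_⟩, ?_⟩
    · exact (ih t ht).1.2
    · have hrec : x (m + 1 + 1) t - x (m + 1) t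
          = L (fun u => g u (x (m + 1) u) - g u (x m u)) t := by
        rw [hxrec (m + 1) (by omega) t, hxrec m hm t]
        have heq : (fun u => g u (x (m + 1) u) - g u (x m u))
            = (fun u => g u (x (m + 1) u)) - (fun u => g u (x m u)) := rfl
        rw [heq, map_sub, Pi.sub_apply]
        abel
      rw [hrec]
      have hb : ∀ u ∈ T, ‖g u (x (m + 1) u) - g u (x m u)‖
          ≤ (l * (a * (K * l) ^ m * ‖y₀‖)) * Real.exp (-lam * tsS T u) := by
        intro u hu
        have h1 := hglip u hu _ (hball u hu _ (hxm1 u hu)) _ (hball u hu _ (ih u hu).1.1)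
        have h2 := (ih u hu).2
        calc ‖g u (x (m + 1) u) - g u (x m u)‖ ≤ l * ‖x (m + 1) u - x m u‖ := h1
          _ ≤ l * (a * (K * l) ^ m * ‖y₀‖ * Real.exp (-lam * tsS T u)) :=
            mul_le_mul_of_nonneg_left h2 hl
          _ = (l * (a * (K * l) ^ m * ‖y₀‖)) * Real.exp (-lam * tsS T u) := by ring
      have hL := hLw _ _ hb t ht
      calc ‖L (fun u => g u (x (m + 1) u) - g u (x m u)) t‖
          ≤ K * (l * (a * (K * l) ^ m * ‖y₀‖)) * Real.exp (-lam * tsS T t) := hL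
        _ = a * (K * l) ^ (m + 1) * ‖y₀‖ * Real.exp (-lam * tsS T t) := by ring
end

section
/- (Lemma 6.5) In the setting of Lemma 6.4 (time scale 𝕋 with time transformation s; Ψ with |Ψ(t)y| ≤ a|y|e^{−λ s(t)} for y ∈ U⁺, a ≥ 1; linear 𝐋 with the weighted bound |f(t)| ≤ Ce^{−λ s(t)} ⇒ |𝐋f(t)| ≤ KCe^{−λ s(t)}; 𝐠 with 𝐠(t,0) = 0, Lipschitz constant l in x on B̄(0,r₀); Kl < 1/2), define for each y₀ ∈ U⁺ with 2a|y₀| ≤ r₀ the iterates x⁰(t,y₀) := 0, x¹(t,y₀) := Ψ(t)y₀, x^{m+1}(t,y₀) := Ψ(t)y₀ + 𝐋[𝐠(·, x^m(·,y₀))](t), and z^m(t,y₀) := x^m(t,y₀) − x¹(t,y₀). Then for all admissible y₀, y₁ ∈ U⁺, all t ∈ 𝕋 and all m ≥ 1: |x^m(t,y₀) − x^m(t,y₁)| ≤ 2a e^{−λ s(t)}|y₀ − y₁| and |z^m(t,y₀) − z^m(t,y₁)| ≤ 2Kal e^{−λ s(t)}|y₀ − y₁|. -/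
open Set Filter

/-- Lemma 6.5. In the setting of Lemma 6.4, the Lyapunov–Perron iterates
`x^m(t, y₀)` and `z^m(t, y₀) = x^m(t, y₀) − x¹(t, y₀)` are Lipschitz continuous in the
initial point: `|x^m(t,y₀) − x^m(t,y₁)| ≤ 2a e^{−λ s(t)}|y₀ − y₁|` and
`|z^m(t,y₀) − z^m(t,y₁)| ≤ 2Kal e^{−λ s(t)}|y₀ − y₁|` for all admissible `y₀, y₁ ∈ U⁺`,
`t ∈ T` and `m ≥ 1`. -/
theorem lyapunov_perron_iterates_lipschitz (n : ℕ) (T : Set ℝ) (hT : IsTimeScale T)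
    (Ψ : ℝ → Matrix (Fin n) (Fin n) ℝ) (hΨ0 : Ψ 0 = 1)
    (Up : Submodule ℝ (EuclideanSpace ℝ (Fin n)))
    (a lam : ℝ) (ha : 1 ≤ a) (hlam : 0 < lam)
    (hdecay : ∀ t ∈ T, ∀ y ∈ Up, ‖mulE (Ψ t) y‖ ≤ a * ‖y‖ * Real.exp (-lam * tsS T t))
    (L : (ℝ → EuclideanSpace ℝ (Fin n)) →ₗ[ℝ] (ℝ → EuclideanSpace ℝ (Fin n)))
    (K : ℝ) (hK : 0 < K)
    (hLw : ∀ f : ℝ → EuclideanSpace ℝ (Fin n), ∀ C : ℝ,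
      (∀ t ∈ T, ‖f t‖ ≤ C * Real.exp (-lam * tsS T t)) →
      ∀ t ∈ T, ‖L f t‖ ≤ K * C * Real.exp (-lam * tsS T t))
    (r₀ l : ℝ) (hr₀ : 0 < r₀) (hl : 0 ≤ l)
    (g : ℝ → EuclideanSpace ℝ (Fin n) → EuclideanSpace ℝ (Fin n))
    (hg0 : ∀ t ∈ T, g t 0 = 0)
    (hglip : ∀ t ∈ T, ∀ x₁ ∈ Metric.closedBall (0 : EuclideanSpace ℝ (Fin n)) r₀,
      ∀ x₂ ∈ Metric.closedBall (0 : EuclideanSpace ℝ (Fin n)) r₀,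
      ‖g t x₁ - g t x₂‖ ≤ l * ‖x₁ - x₂‖)
    (hKl : K * l < 1 / 2)
    (X : ℕ → EuclideanSpace ℝ (Fin n) → ℝ → EuclideanSpace ℝ (Fin n))
    (hX0 : ∀ y t, X 0 y t = 0)
    (hX1 : ∀ y t, X 1 y t = mulE (Ψ t) y)
    (hXrec : ∀ m : ℕ, 1 ≤ m → ∀ y t,
      X (m + 1) y t = mulE (Ψ t) y + L (fun τ => g τ (X m y τ)) t) :
    ∀ y₀ ∈ Up, ∀ y₁ ∈ Up, 2 * a * ‖y₀‖ ≤ r₀ → 2 * a * ‖y₁‖ ≤ r₀ →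
      ∀ m : ℕ, 1 ≤ m → ∀ t ∈ T,
        ‖X m y₀ t - X m y₁ t‖ ≤ 2 * a * Real.exp (-lam * tsS T t) * ‖y₀ - y₁‖ ∧
        ‖(X m y₀ t - X 1 y₀ t) - (X m y₁ t - X 1 y₁ t)‖ ≤
          2 * K * a * l * Real.exp (-lam * tsS T t) * ‖y₀ - y₁‖ := by
  intro y₀ hy₀ y₁ hy₁ hr0 hr1
  -- positivity of the time transformation
  have hGnn : ∀ τ : ℝ, 0 ≤ tsG T τ := by
    intro τ
    unfold tsG
    split
    · exact div_nonneg (Real.log_nonneg (by linarith)) (by linarith)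
    · norm_num
  have hS : ∀ t ∈ T, 0 ≤ tsS T t := by
    intro t ht
    have ht0 : (0:ℝ) ≤ t := hT.2.1 ht
    exact intervalIntegral.integral_nonneg ht0 (fun u _ => hGnn u)
  have hE1 : ∀ t ∈ T, Real.exp (-lam * tsS T t) ≤ 1 := by
    intro t ht
    apply Real.exp_le_one_iff.mpr
    have := hS t ht
    nlinarith
  have hEpos : ∀ t : ℝ, 0 < Real.exp (-lam * tsS T t) := fun t => Real.exp_pos _
  have ha0 : (0:ℝ) ≤ a := by linarith
  -- uniform bound on iterates (Lemma 6.4)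
  have hbound : ∀ y ∈ Up, 2 * a * ‖y‖ ≤ r₀ → ∀ m : ℕ, ∀ t ∈ T,
      ‖X m y t‖ ≤ 2 * a * ‖y‖ * Real.exp (-lam * tsS T t) := by
    intro y hy hr m
    induction m with
    | zero =>
      intro t ht
      rw [hX0]
      simp only [norm_zero]
      positivity
    | succ m ih =>
      match m, ih with
      | 0, _ =>
        intro t ht
        rw [hX1]
        have := hdecay t ht y hy
        have hnn : 0 ≤ a * ‖y‖ * Real.exp (-lam * tsS T t) := by positivity
        linarith
      | (k+1), ih =>
        intro t ht
        rw [hXrec (k+1) (by omega) y t]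
        have hmem : ∀ τ ∈ T, X (k+1) y τ ∈
            Metric.closedBall (0 : EuclideanSpace ℝ (Fin n)) r₀ := by
          intro τ hτ
          rw [Metric.mem_closedBall, dist_zero_right]
          calc ‖X (k+1) y τ‖ ≤ 2 * a * ‖y‖ * Real.exp (-lam * tsS T τ) := ih τ hτ
            _ ≤ 2 * a * ‖y‖ * 1 := by
                have := hE1 τ hτ
                have h0 : (0:ℝ) ≤ 2 * a * ‖y‖ := by positivity
                nlinarith
            _ ≤ r₀ := by linarith
        have hf : ∀ τ ∈ T, ‖(fun τ => g τ (X (k+1) y τ)) τ‖ ≤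
            (l * (2 * a * ‖y‖)) * Real.exp (-lam * tsS T τ) := by
          intro τ hτ
          have h0mem : (0 : EuclideanSpace ℝ (Fin n)) ∈
              Metric.closedBall (0 : EuclideanSpace ℝ (Fin n)) r₀ := by
            simp [le_of_lt hr₀]
          have := hglip τ hτ (X (k+1) y τ) (hmem τ hτ) 0 h0mem
          rw [hg0 τ hτ, sub_zero, sub_zero] at this
          calc ‖g τ (X (k+1) y τ)‖ ≤ l * ‖X (k+1) y τ‖ := this
            _ ≤ l * (2 * a * ‖y‖ * Real.exp (-lam * tsS T τ)) :=
                mul_le_mul_of_nonneg_left (ih τ hτ) hl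
            _ = (l * (2 * a * ‖y‖)) * Real.exp (-lam * tsS T τ) := by ring
        have hL := hLw _ _ hf t ht
        have hΨy := hdecay t ht y hy
        calc ‖mulE (Ψ t) y + L (fun τ => g τ (X (k+1) y τ)) t‖
            ≤ ‖mulE (Ψ t) y‖ + ‖L (fun τ => g τ (X (k+1) y τ)) t‖ := norm_add_le _ _
          _ ≤ a * ‖y‖ * Real.exp (-lam * tsS T t)
              + K * (l * (2 * a * ‖y‖)) * Real.exp (-lam * tsS T t) := by linarith
          _ ≤ 2 * a * ‖y‖ * Real.exp (-lam * tsS T t) := by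
              have h : 0 ≤ (a * ‖y‖ * Real.exp (-lam * tsS T t)) * (1/2 - K * l) :=
                mul_nonneg (by positivity) (by linarith)
              nlinarith [h]
  have hsub : y₀ - y₁ ∈ Up := Up.sub_mem hy₀ hy₁
  intro m hm
  induction m, hm using Nat.le_induction with
  | base =>
    intro t ht
    have hΨ : mulE (Ψ t) y₀ - mulE (Ψ t) y₁ = mulE (Ψ t) (y₀ - y₁) := by
      unfold mulE; rw [map_sub]
    constructor
    · rw [hX1, hX1, hΨ]
      have := hdecay t ht (y₀ - y₁) hsub
      have hnn : 0 ≤ a * ‖y₀ - y₁‖ * Real.exp (-lam * tsS T t) := by positivity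
      nlinarith [hnn]
    · simp only [sub_self, sub_zero, norm_zero]
      positivity
  | succ m hm ih =>
    intro t ht
    set f₀ : ℝ → EuclideanSpace ℝ (Fin n) := fun τ => g τ (X m y₀ τ) with hf₀
    set f₁ : ℝ → EuclideanSpace ℝ (Fin n) := fun τ => g τ (X m y₁ τ) with hf₁
    have hmem : ∀ y ∈ Up, 2 * a * ‖y‖ ≤ r₀ → ∀ τ ∈ T, X m y τ ∈
        Metric.closedBall (0 : EuclideanSpace ℝ (Fin n)) r₀ := by
      intro y hy hr τ hτ
      rw [Metric.mem_closedBall, dist_zero_right]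
      calc ‖X m y τ‖ ≤ 2 * a * ‖y‖ * Real.exp (-lam * tsS T τ) := hbound y hy hr m τ hτ
        _ ≤ 2 * a * ‖y‖ * 1 := by
            have := hE1 τ hτ
            have h0 : (0:ℝ) ≤ 2 * a * ‖y‖ := by positivity
            nlinarith
        _ ≤ r₀ := by linarith
    have hdiff : ∀ τ ∈ T, ‖(f₀ - f₁) τ‖ ≤
        (2 * a * l * ‖y₀ - y₁‖) * Real.exp (-lam * tsS T τ) := by
      intro τ hτ
      have h1 := hglip τ hτ (X m y₀ τ) (hmem y₀ hy₀ hr0 τ hτ)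
        (X m y₁ τ) (hmem y₁ hy₁ hr1 τ hτ)
      have h2 := (ih τ hτ).1
      calc ‖(f₀ - f₁) τ‖ = ‖g τ (X m y₀ τ) - g τ (X m y₁ τ)‖ := rfl
        _ ≤ l * ‖X m y₀ τ - X m y₁ τ‖ := h1
        _ ≤ l * (2 * a * Real.exp (-lam * tsS T τ) * ‖y₀ - y₁‖) :=
            mul_le_mul_of_nonneg_left h2 hl
        _ = (2 * a * l * ‖y₀ - y₁‖) * Real.exp (-lam * tsS T τ) := by ring
    have hL := hLw _ _ hdiff t ht
    have hLsub : L (f₀ - f₁) t = L f₀ t - L f₁ t := by rw [map_sub]; rfl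
    have hz : (X (m+1) y₀ t - X 1 y₀ t) - (X (m+1) y₁ t - X 1 y₁ t) = L (f₀ - f₁) t := by
      rw [hXrec m hm y₀ t, hXrec m hm y₁ t, hX1, hX1, hLsub]
      abel
    have hzb : ‖(X (m+1) y₀ t - X 1 y₀ t) - (X (m+1) y₁ t - X 1 y₁ t)‖ ≤
        2 * K * a * l * Real.exp (-lam * tsS T t) * ‖y₀ - y₁‖ := by
      rw [hz]
      calc ‖L (f₀ - f₁) t‖ ≤ K * (2 * a * l * ‖y₀ - y₁‖) * Real.exp (-lam * tsS T t) := hL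
        _ = 2 * K * a * l * Real.exp (-lam * tsS T t) * ‖y₀ - y₁‖ := by ring
    refine ⟨?_, hzb⟩
    have hΨ : mulE (Ψ t) y₀ - mulE (Ψ t) y₁ = mulE (Ψ t) (y₀ - y₁) := by
      unfold mulE; rw [map_sub]
    have hx : X (m+1) y₀ t - X (m+1) y₁ t = mulE (Ψ t) (y₀ - y₁) + L (f₀ - f₁) t := by
      rw [hXrec m hm y₀ t, hXrec m hm y₁ t, hLsub, ← hΨ]
      abel
    rw [hx]
    have hΨb := hdecay t ht (y₀ - y₁) hsub
    calc ‖mulE (Ψ t) (y₀ - y₁) + L (f₀ - f₁) t‖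
        ≤ ‖mulE (Ψ t) (y₀ - y₁)‖ + ‖L (f₀ - f₁) t‖ := norm_add_le _ _
      _ ≤ a * ‖y₀ - y₁‖ * Real.exp (-lam * tsS T t)
          + K * (2 * a * l * ‖y₀ - y₁‖) * Real.exp (-lam * tsS T t) := by linarith
      _ ≤ 2 * a * Real.exp (-lam * tsS T t) * ‖y₀ - y₁‖ := by
          have h : 0 ≤ (a * ‖y₀ - y₁‖ * Real.exp (-lam * tsS T t)) * (1/2 - K * l) :=
            mul_nonneg (by positivity) (by linarith)
          nlinarith [h]
end
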